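/- arXiv:1809.02975 — 8 statements merged into one kernel-verified Lean document; each statement's English description precedes it below -/
import Mathlib

section
/- For x, y ∈ ℝ² with x ≠ 0 and y ≠ 0, equality |ω(x,y)| = ‖x‖·‖y‖ₐ holds if and only if x is Birkhoff orthogonal to y (i.e., ‖x‖ ≤ ‖x + t·y‖ for all real t). -/
set_option maxHeartbeats 1600000 in
/-- for nonzero `x, y`, `|ω(x,y)| = ‖x‖·‖y‖ₐ` iff `x` is Birkhoff
orthogonal to `y`, i.e. `‖x‖ ≤ ‖x + t•y‖` for all real `t`. -/
theorem abs_omega_eq_iff_birkhoff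
    (ω : (ℝ × ℝ) →ₗ[ℝ] (ℝ × ℝ) →ₗ[ℝ] ℝ)
    (hskew : ∀ x y, ω x y = - ω y x)
    (hnondeg : ∀ x, (∀ y, ω x y = 0) → x = 0)
    (N : ℝ × ℝ → ℝ)
    (hN0 : ∀ x, 0 ≤ N x)
    (hN1 : ∀ x, N x = 0 ↔ x = 0)
    (hN2 : ∀ (a : ℝ) (x : ℝ × ℝ), N (a • x) = |a| * N x)
    (hN3 : ∀ x y, N (x + y) ≤ N x + N y)
    (Na : ℝ × ℝ → ℝ)
    (hNa : ∀ x, Na x = sSup ((fun y => ω x y) '' {y | N y = 1}))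
    (x y : ℝ × ℝ) (hx : x ≠ 0) (hy : y ≠ 0) :
    |ω x y| = N x * Na y ↔ (∀ t : ℝ, N x ≤ N (x + t • y)) := by
  -- basic facts
  have hN0' : N 0 = 0 := (hN1 0).2 rfl
  have hNneg : ∀ w, N (-w) = N w := by
    intro w
    have := hN2 (-1) w
    simpa using this
  have hself : ∀ z : ℝ × ℝ, ω z z = 0 := by
    intro z; have := hskew z z; linarith
  have hNx : 0 < N x :=
    lt_of_le_of_ne (hN0 x) (fun h => hx ((hN1 x).1 h.symm))
  -- decomposition of vectors in coordinates
  have hdecomp : ∀ z : ℝ × ℝ, z = z.1 • ((1:ℝ),(0:ℝ)) + z.2 • ((0:ℝ),(1:ℝ)) := by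
    intro z
    ext <;> simp
  -- N is dominated by the sup norm
  set C : ℝ := N ((1:ℝ),(0:ℝ)) + N ((0:ℝ),(1:ℝ)) with hCdef
  have hNle : ∀ w : ℝ × ℝ, N w ≤ C * ‖w‖ := by
    intro w
    calc N w = N (w.1 • ((1:ℝ),(0:ℝ)) + w.2 • ((0:ℝ),(1:ℝ))) := by rw [← hdecomp]
    _ ≤ N (w.1 • ((1:ℝ),(0:ℝ))) + N (w.2 • ((0:ℝ),(1:ℝ))) := hN3 _ _
    _ = |w.1| * N ((1:ℝ),(0:ℝ)) + |w.2| * N ((0:ℝ),(1:ℝ)) := by rw [hN2, hN2]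
    _ ≤ ‖w‖ * N ((1:ℝ),(0:ℝ)) + ‖w‖ * N ((0:ℝ),(1:ℝ)) := by
        have h1 : |w.1| ≤ ‖w‖ := by simpa using norm_fst_le w
        have h2 : |w.2| ≤ ‖w‖ := by simpa using norm_snd_le w
        have := hN0 ((1:ℝ),(0:ℝ)); have := hN0 ((0:ℝ),(1:ℝ))
        nlinarith
    _ = C * ‖w‖ := by ring
  have hC0 : 0 ≤ C := by
    have := hN0 ((1:ℝ),(0:ℝ)); have := hN0 ((0:ℝ),(1:ℝ)); positivity
  -- N is continuous
  have hcont : Continuous N := by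
    have hlip : LipschitzWith C.toNNReal N := by
      apply LipschitzWith.of_dist_le_mul
      intro a b
      rw [Real.dist_eq, Real.coe_toNNReal _ hC0]
      have h1 : N a - N b ≤ N (a - b) := by
        have := hN3 (a - b) b; simp at this; linarith
      have h2 : N b - N a ≤ N (a - b) := by
        have := hN3 (b - a) a; simp at this
        have h := hNneg (a - b)
        rw [neg_sub] at h
        linarith
      have h3 := hNle (a - b)
      rw [dist_eq_norm]
      rw [abs_le]
      constructor <;> nlinarith
    exact hlip.continuous
  -- minimum of N on the euclidean sphere
  have hsphne : (Metric.sphere (0:ℝ×ℝ) 1).Nonempty := by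
    refine ⟨((1:ℝ),(0:ℝ)), ?_⟩
    simp [Prod.norm_def]
  obtain ⟨z₀, hz₀S, hz₀min⟩ :=
    (isCompact_sphere (0:ℝ×ℝ) 1).exists_isMinOn hsphne hcont.continuousOn
  set m : ℝ := N z₀ with hmdef
  have hz₀norm : ‖z₀‖ = 1 := by simpa using hz₀S
  have hz₀ne : z₀ ≠ 0 := by
    intro h; rw [h] at hz₀norm; simp at hz₀norm
  have hm : 0 < m :=
    lt_of_le_of_ne (hN0 z₀) (fun h => hz₀ne ((hN1 z₀).1 h.symm))
  have hlow : ∀ z : ℝ × ℝ, m * ‖z‖ ≤ N z := by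
    intro z
    by_cases hz : z = 0
    · simp [hz, hN0']
    · have hnz : (0:ℝ) < ‖z‖ := norm_pos_iff.2 hz
      have hu : ‖(‖z‖⁻¹ • z)‖ = 1 := by
        rw [norm_smul]; simp [abs_of_pos (inv_pos.2 hnz)]
        field_simp
      have humem : (‖z‖⁻¹ • z) ∈ Metric.sphere (0:ℝ×ℝ) 1 := by
        simpa using hu
      have h5 : m ≤ N (‖z‖⁻¹ • z) := hz₀min humem
      have hNu : N (‖z‖⁻¹ • z) = ‖z‖⁻¹ * N z := by
        rw [hN2]; simp [abs_of_pos (inv_pos.2 hnz)]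
      rw [hNu] at h5
      have this := h5
      calc m * ‖z‖ ≤ (‖z‖⁻¹ * N z) * ‖z‖ := by nlinarith
      _ = N z := by field_simp
  -- boundedness of ω v on the N-unit sphere
  have hbdd : ∀ v : ℝ × ℝ, BddAbove ((fun z => ω v z) '' {z | N z = 1}) := by
    intro v
    refine ⟨(|ω v ((1:ℝ),(0:ℝ))| + |ω v ((0:ℝ),(1:ℝ))|) / m, ?_⟩
    rintro r ⟨z, hz, rfl⟩
    simp only [Set.mem_setOf_eq] at hz
    have hωz : ω v z = z.1 * ω v ((1:ℝ),(0:ℝ)) + z.2 * ω v ((0:ℝ),(1:ℝ)) := by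
      conv_lhs => rw [hdecomp z]
      rw [map_add, map_smul, map_smul, smul_eq_mul, smul_eq_mul]
    have h1 : |z.1| ≤ ‖z‖ := by simpa using norm_fst_le z
    have h2 : |z.2| ≤ ‖z‖ := by simpa using norm_snd_le z
    have h3 : m * ‖z‖ ≤ 1 := by rw [← hz]; exact hlow z
    have h4 : ‖z‖ ≤ 1 / m := by rw [le_div_iff₀ hm]; linarith
    have ha := abs_nonneg (ω v ((1:ℝ),(0:ℝ)))
    have hb := abs_nonneg (ω v ((0:ℝ),(1:ℝ)))
    have e1 : z.1 * ω v ((1:ℝ),(0:ℝ)) ≤ |z.1| * |ω v ((1:ℝ),(0:ℝ))| := by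
      rw [← abs_mul]; exact le_abs_self _
    have e2 : z.2 * ω v ((0:ℝ),(1:ℝ)) ≤ |z.2| * |ω v ((0:ℝ),(1:ℝ))| := by
      rw [← abs_mul]; exact le_abs_self _
    show ω v z ≤ _
    rw [hωz, div_eq_mul_inv]
    have hinv : ‖z‖ ≤ m⁻¹ := by rwa [one_div] at h4
    nlinarith [norm_nonneg z]
  -- general upper bound : ω y z ≤ Na y * N z
  have hupper : ∀ z : ℝ × ℝ, ω y z ≤ Na y * N z := by
    intro z
    by_cases hz : z = 0
    · simp [hz, hN0']
    · have hNz : 0 < N z :=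
        lt_of_le_of_ne (hN0 z) (fun h => hz ((hN1 z).1 h.symm))
      have hmem : ω y ((N z)⁻¹ • z) ∈ ((fun w => ω y w) '' {w | N w = 1}) := by
        refine ⟨(N z)⁻¹ • z, ?_, rfl⟩
        simp only [Set.mem_setOf_eq, hN2, abs_of_pos (inv_pos.2 hNz)]
        field_simp
      have hle : ω y ((N z)⁻¹ • z) ≤ Na y := by
        rw [hNa]; exact le_csSup (hbdd y) hmem
      have heq2 : ω y ((N z)⁻¹ • z) = (N z)⁻¹ * ω y z := by simp
      rw [heq2] at hle
      calc ω y z = N z * ((N z)⁻¹ * ω y z) := by field_simp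
      _ ≤ N z * Na y := by nlinarith
      _ = Na y * N z := by ring
  have habs : ∀ z : ℝ × ℝ, |ω y z| ≤ Na y * N z := by
    intro z
    rw [abs_le]
    constructor
    · have := hupper (-z)
      rw [map_neg, hNneg] at this
      linarith
    · exact hupper z
  -- positivity of Na y
  have hNay : 0 < Na y := by
    obtain ⟨z, hz⟩ : ∃ z, ω y z ≠ 0 := by
      by_contra h; push_neg at h; exact hy (hnondeg y h)
    have hzne : z ≠ 0 := by
      intro h; rw [h] at hz; simp at hz
    have hNz : 0 < N z :=
      lt_of_le_of_ne (hN0 z) (fun h => hzne ((hN1 z).1 h.symm))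
    have := habs z
    have habspos : 0 < |ω y z| := abs_pos.2 hz
    nlinarith
  constructor
  · -- equality implies Birkhoff orthogonality
    intro heq t
    have h1 : ω y (x + t • y) = ω y x := by
      simp [hself]
    have h2 : |ω y x| ≤ Na y * N (x + t • y) := by
      rw [← h1]; exact habs _
    have h3 : |ω x y| = |ω y x| := by rw [hskew x y, abs_neg]
    rw [h3] at heq
    nlinarith
  · -- Birkhoff orthogonality implies equality
    intro hB
    -- x and y are linearly independent
    have hdep : ∀ s : ℝ, x ≠ s • y := by
      intro s h
      have hb := hB (-s)
      rw [h] at hb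
      have : s • y + (-s) • y = 0 := by
        rw [← add_smul]; simp
      rw [this, hN0'] at hb
      rw [h] at hNx
      linarith [hNx]
    have hyne' : y.1 ≠ 0 ∨ y.2 ≠ 0 := by
      by_contra h
      push_neg at h
      exact hy (Prod.ext h.1 h.2)
    set d : ℝ := x.1 * y.2 - x.2 * y.1 with hddef
    have hdet : d ≠ 0 := by
      intro hd
      rcases hyne' with h1 | h2
      · apply hdep (x.1 / y.1)
        have : x.2 = x.1 / y.1 * y.2 := by
          field_simp
          nlinarith [hd]
        ext
        · simp; field_simp
        · simpa using this
      · apply hdep (x.2 / y.2)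
        have : x.1 = x.2 / y.2 * y.1 := by
          field_simp
          nlinarith [hd]
        ext
        · simpa using this
        · simp; field_simp
    -- every vector decomposes along x and y
    have hspan : ∀ z : ℝ × ℝ, ∃ a b : ℝ, z = a • x + b • y := by
      intro z
      refine ⟨(z.1 * y.2 - z.2 * y.1) / d, (x.1 * z.2 - x.2 * z.1) / d, ?_⟩
      have h1 : ((z.1 * y.2 - z.2 * y.1) / d) * x.1 + ((x.1 * z.2 - x.2 * z.1) / d) * y.1 = z.1 := by
        field_simp
        ring
      have h2 : ((z.1 * y.2 - z.2 * y.1) / d) * x.2 + ((x.1 * z.2 - x.2 * z.1) / d) * y.2 = z.2 := by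
        field_simp
        ring
      ext
      · simpa using h1.symm
      · simpa using h2.symm
    -- ω y x ≠ 0
    have hωyx : ω y x ≠ 0 := by
      intro h0
      apply hy
      apply hnondeg
      intro z
      obtain ⟨a, b, rfl⟩ := hspan z
      rw [map_add, map_smul, map_smul, hself, h0]
      simp
    -- the key bound on the unit sphere
    have key : ∀ z : ℝ × ℝ, N z = 1 → ω y z ≤ |ω y x| / N x := by
      intro z hz
      obtain ⟨a, b, rfl⟩ := hspan z
      have hval : ω y (a • x + b • y) = a * ω y x := by
        rw [map_add, map_smul, map_smul, hself]
        simp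
      rw [hval]
      by_cases ha : a = 0
      · rw [ha, zero_mul]
        positivity
      · have hcomb : a • (x + (b / a) • y) = a • x + b • y := by
          rw [smul_add, smul_smul]
          congr 2
          field_simp
        have hNz : N (a • x + b • y) = |a| * N (x + (b / a) • y) := by
          rw [← hcomb, hN2]
        have hBa := hB (b / a)
        have haN : |a| * N x ≤ 1 := by
          rw [hNz] at hz
          nlinarith [abs_nonneg a]
        have h5 : a * ω y x ≤ |a| * |ω y x| := by
          rw [← abs_mul]; exact le_abs_self _
        rw [div_eq_mul_inv]
        have h6 : |a| ≤ (N x)⁻¹ := by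
          rw [← one_mul (N x)⁻¹]
          rw [le_mul_inv_iff₀ hNx]
          linarith
        nlinarith [abs_nonneg (ω y x), abs_nonneg a]
    -- the bound is attained
    have hsgn : ∃ s : ℝ, |s| = 1 ∧ s * ω y x = |ω y x| := by
      rcases le_or_gt 0 (ω y x) with h | h
      · exact ⟨1, by simp, by simp [abs_of_nonneg h]⟩
      · exact ⟨-1, by simp, by simp [abs_of_neg h]⟩
    obtain ⟨s, hs1, hs2⟩ := hsgn
    have hmem : |ω y x| / N x ∈ ((fun z => ω y z) '' {z | N z = 1}) := by
      refine ⟨(s * (N x)⁻¹) • x, ?_, ?_⟩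
      · simp only [Set.mem_setOf_eq, hN2, abs_mul, hs1, one_mul,
          abs_of_pos (inv_pos.2 hNx)]
        field_simp
      · show ω y ((s * (N x)⁻¹) • x) = |ω y x| / N x
        rw [map_smul]
        simp only [smul_eq_mul]
        rw [div_eq_mul_inv, ← hs2]
        ring
    have hNaeq : Na y = |ω y x| / N x := by
      rw [hNa]
      apply le_antisymm
      · apply csSup_le ⟨_, hmem⟩
        rintro r ⟨z, hz, rfl⟩
        exact key z hz
      · exact le_csSup (hbdd y) hmem
    rw [hNaeq, hskew x y, abs_neg]
    field_simp
end

section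
/- For any unit vectors x, y ∈ ℝ² (‖x‖ = ‖y‖ = 1), the Minkowskian sine function satisfies |sm(x,y)| = inf{‖x + t·y‖ : t ∈ ℝ}, where sm(x,y) = ω(x,y)/(‖x‖·‖y‖ₐ). -/
/-- for unit vectors `x, y`, `|sm(x,y)| = inf{‖x + t·y‖ : t ∈ ℝ}`,
where `sm(x,y) = ω(x,y)/(‖x‖·‖y‖ₐ)`. -/
theorem abs_sm_eq_inf_dist
    (ω : (ℝ × ℝ) →ₗ[ℝ] (ℝ × ℝ) →ₗ[ℝ] ℝ)
    (hskew : ∀ x y, ω x y = - ω y x)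
    (hnondeg : ∀ x, (∀ y, ω x y = 0) → x = 0)
    (N : ℝ × ℝ → ℝ)
    (hN0 : ∀ x, 0 ≤ N x)
    (hN1 : ∀ x, N x = 0 ↔ x = 0)
    (hN2 : ∀ (a : ℝ) (x : ℝ × ℝ), N (a • x) = |a| * N x)
    (hN3 : ∀ x y, N (x + y) ≤ N x + N y)
    (Na : ℝ × ℝ → ℝ)
    (hNa : ∀ x, Na x = sSup ((fun y => ω x y) '' {y | N y = 1}))
    (sm : (ℝ × ℝ) → (ℝ × ℝ) → ℝ)
    (hsm : ∀ x y, sm x y = ω x y / (N x * Na y))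
    (x y : ℝ × ℝ) (hx : N x = 1) (hy : N y = 1) :
    |sm x y| = sInf ((fun t : ℝ => N (x + t • y)) '' Set.univ) := by
  classical
  have hN0' : N 0 = 0 := (hN1 0).mpr rfl
  have hNpos : ∀ z : ℝ × ℝ, z ≠ 0 → 0 < N z := fun z hz =>
    (hN0 z).lt_of_ne (fun h => hz ((hN1 z).mp h.symm))
  -- N is Lipschitz, hence continuous
  set C : ℝ := N (1, 0) + N (0, 1) with hC
  have hC0 : 0 ≤ C := add_nonneg (hN0 _) (hN0 _)
  have hNle : ∀ p : ℝ × ℝ, N p ≤ C * ‖p‖ := by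
    intro p
    have hp : p = p.1 • ((1:ℝ), (0:ℝ)) + p.2 • ((0:ℝ), (1:ℝ)) := by
      ext <;> simp
    calc N p = N (p.1 • ((1:ℝ), (0:ℝ)) + p.2 • ((0:ℝ), (1:ℝ))) := by rw [← hp]
      _ ≤ N (p.1 • ((1:ℝ), (0:ℝ))) + N (p.2 • ((0:ℝ), (1:ℝ))) := hN3 _ _
      _ = |p.1| * N (1, 0) + |p.2| * N (0, 1) := by rw [hN2, hN2]
      _ ≤ ‖p‖ * N (1, 0) + ‖p‖ * N (0, 1) := by
          gcongr
          · exact hN0 _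
          · exact (Real.norm_eq_abs _ ▸ norm_fst_le p)
          · exact hN0 _
          · exact (Real.norm_eq_abs _ ▸ norm_snd_le p)
      _ = C * ‖p‖ := by ring
  have hNcont : Continuous N := by
    apply (LipschitzWith.of_dist_le_mul (K := C.toNNReal) (f := N) ?_).continuous
    intro a b
    rw [Real.coe_toNNReal C hC0, Real.dist_eq, dist_eq_norm]
    have h1 : N a - N b ≤ N (a - b) := by
      have := hN3 (a - b) b; simp at this; linarith
    have h2 : N b - N a ≤ N (a - b) := by
      have := hN3 (b - a) a; simp at this
      have hneg : N (b - a) = N (a - b) := by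
        have h := hN2 (-1) (a - b); simpa [neg_sub] using h
      linarith
    have := hNle (a - b)
    rw [abs_sub_le_iff]
    constructor <;> linarith
  -- lower bound of N in terms of the Euclidean norm
  obtain ⟨m, hm0, hmle⟩ : ∃ m > 0, ∀ z : ℝ × ℝ, m * ‖z‖ ≤ N z := by
    have hK : IsCompact (Metric.sphere (0 : ℝ × ℝ) 1) := isCompact_sphere 0 1
    have hne : (Metric.sphere (0 : ℝ × ℝ) 1).Nonempty :=
      NormedSpace.sphere_nonempty.mpr zero_le_one
    obtain ⟨w, hwS, hwmin⟩ := hK.exists_isMinOn hne hNcont.continuousOn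
    have hw1 : ‖w‖ = 1 := by simpa using hwS
    have hwne : w ≠ 0 := by
      intro h; rw [h] at hw1; simp at hw1
    refine ⟨N w, hNpos w hwne, ?_⟩
    intro z
    by_cases hz : z = 0
    · simp [hz, hN0']
    · have hz' : ‖z‖ ≠ 0 := norm_ne_zero_iff.mpr hz
      have hmem : ‖z‖⁻¹ • z ∈ Metric.sphere (0 : ℝ × ℝ) 1 := by
        simp [norm_smul, abs_of_nonneg (inv_nonneg.mpr (norm_nonneg z)),
          inv_mul_cancel₀ hz']
      have h2 : N w ≤ N (‖z‖⁻¹ • z) := isMinOn_iff.mp hwmin _ hmem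
      rw [hN2, abs_of_nonneg (inv_nonneg.mpr (norm_nonneg z))] at h2
      have hzpos : (0:ℝ) < ‖z‖ := lt_of_le_of_ne (norm_nonneg z) (Ne.symm hz')
      calc N w * ‖z‖ ≤ (‖z‖⁻¹ * N z) * ‖z‖ := by nlinarith
        _ = N z := by field_simp
  -- the unit sphere of N
  set S : Set (ℝ × ℝ) := {z | N z = 1} with hSdef
  have hSclosed : IsClosed S := isClosed_eq hNcont continuous_const
  have hSbdd : S ⊆ Metric.closedBall 0 m⁻¹ := by
    intro z hz
    have h1 : m * ‖z‖ ≤ 1 := by rw [← hz]; exact hmle z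
    rw [Metric.mem_closedBall, dist_zero_right]
    nlinarith [mul_inv_cancel₀ hm0.ne', norm_nonneg z]
  have hScompact : IsCompact S :=
    Metric.isCompact_of_isClosed_isBounded hSclosed
      ((Metric.isBounded_closedBall).subset hSbdd)
  have hSne : S.Nonempty := ⟨y, hy⟩
  -- representation of ω
  set k : ℝ := ω (1, 0) (0, 1) with hkdef
  have hrep : ∀ u v : ℝ × ℝ, ω u v = (u.1 * v.2 - u.2 * v.1) * k := by
    intro u v
    have h11 : ω ((1:ℝ), (0:ℝ)) (1, 0) = 0 := by
      have := hskew ((1:ℝ), (0:ℝ)) (1, 0); linarith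
    have h22 : ω ((0:ℝ), (1:ℝ)) (0, 1) = 0 := by
      have := hskew ((0:ℝ), (1:ℝ)) (0, 1); linarith
    have h21 : ω ((0:ℝ), (1:ℝ)) (1, 0) = -k := hskew _ _
    have hu : u = u.1 • ((1:ℝ), (0:ℝ)) + u.2 • ((0:ℝ), (1:ℝ)) := by ext <;> simp
    have hv : v = v.1 • ((1:ℝ), (0:ℝ)) + v.2 • ((0:ℝ), (1:ℝ)) := by ext <;> simp
    calc ω u v = ω (u.1 • ((1:ℝ), (0:ℝ)) + u.2 • ((0:ℝ), (1:ℝ)))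
            (v.1 • ((1:ℝ), (0:ℝ)) + v.2 • ((0:ℝ), (1:ℝ))) := by rw [← hu, ← hv]
      _ = (u.1 * v.2 - u.2 * v.1) * k := by
          simp only [map_add, map_smul, LinearMap.add_apply, LinearMap.smul_apply,
            smul_eq_mul, h11, h22, h21, ← hkdef]
          ring
  -- ω y is continuous
  have hωycont : Continuous (fun z : ℝ × ℝ => ω y z) := (ω y).continuous_of_finiteDimensional
  -- the supremum defining Na y is attained
  obtain ⟨z₀, hz₀S, hz₀max⟩ := hScompact.exists_isMaxOn hSne hωycont.continuousOn
  have hz₀max' : ∀ z ∈ S, ω y z ≤ ω y z₀ := isMaxOn_iff.mp hz₀max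
  have hNay : Na y = ω y z₀ := by
    rw [hNa]
    apply IsGreatest.csSup_eq
    constructor
    · exact ⟨z₀, hz₀S, rfl⟩
    · rintro r ⟨w, hw, rfl⟩
      exact hz₀max' w hw
  have hyne : y ≠ 0 := by
    intro h; rw [h, hN0'] at hy; norm_num at hy
  have hωyy : ω y y = 0 := by have := hskew y y; linarith
  -- Na y > 0
  have hNaypos : 0 < Na y := by
    obtain ⟨w, hw⟩ : ∃ w, ω y w ≠ 0 := by
      by_contra h; push_neg at h; exact hyne (hnondeg y h)
    have hwne : w ≠ 0 := by
      intro h; rw [h] at hw; simp at hw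
    have hNw : 0 < N w := hNpos w hwne
    have hmem : (N w)⁻¹ • w ∈ S := by
      simp only [hSdef, Set.mem_setOf_eq, hN2, abs_of_nonneg (inv_nonneg.mpr hNw.le)]
      field_simp
    have hmem' : -((N w)⁻¹ • w) ∈ S := by
      have h := hN2 (-1) ((N w)⁻¹ • w)
      simp only [hSdef, Set.mem_setOf_eq] at hmem ⊢
      simp at h
      rw [h, hmem]
    have h1 : ω y ((N w)⁻¹ • w) ≤ ω y z₀ := hz₀max' _ hmem
    have h2 : ω y (-((N w)⁻¹ • w)) ≤ ω y z₀ := hz₀max' _ hmem'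
    have hval : ω y ((N w)⁻¹ • w) = (N w)⁻¹ * ω y w := by simp
    have hval2 : ω y (-((N w)⁻¹ • w)) = -((N w)⁻¹ * ω y w) := by simp
    rw [hNay]
    have : (N w)⁻¹ * ω y w ≠ 0 := mul_ne_zero (inv_ne_zero hNw.ne') hw
    rcases this.lt_or_gt with h | h
    · rw [hval2] at h2; linarith
    · rw [hval] at h1; linarith
  -- key inequality : |ω y z| ≤ Na y * N z
  have hkey : ∀ z : ℝ × ℝ, |ω y z| ≤ Na y * N z := by
    intro z
    by_cases hz : z = 0
    · simp [hz, hN0']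
    · have hNz : 0 < N z := hNpos z hz
      have hmem : (N z)⁻¹ • z ∈ S := by
        simp only [hSdef, Set.mem_setOf_eq, hN2, abs_of_nonneg (inv_nonneg.mpr hNz.le)]
        field_simp
      have hmem' : -((N z)⁻¹ • z) ∈ S := by
        have h := hN2 (-1) ((N z)⁻¹ • z)
        simp only [hSdef, Set.mem_setOf_eq] at hmem ⊢
        simp at h
        rw [h, hmem]
      have h1 : ω y ((N z)⁻¹ • z) ≤ Na y := hNay ▸ hz₀max' _ hmem
      have h2 : ω y (-((N z)⁻¹ • z)) ≤ Na y := hNay ▸ hz₀max' _ hmem'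
      have hval : ω y ((N z)⁻¹ • z) = (N z)⁻¹ * ω y z := by simp
      have hval2 : ω y (-((N z)⁻¹ • z)) = -((N z)⁻¹ * ω y z) := by simp
      rw [hval] at h1
      rw [hval2] at h2
      have h1' : ω y z ≤ Na y * N z := by
        have h := mul_le_mul_of_nonneg_left h1 hNz.le
        rw [← mul_assoc, mul_inv_cancel₀ hNz.ne', one_mul] at h
        linarith [mul_comm (N z) (Na y), h]
      have h2' : -(Na y * N z) ≤ ω y z := by
        have h := mul_le_mul_of_nonneg_left h2 hNz.le
        rw [mul_neg, ← mul_assoc, mul_inv_cancel₀ hNz.ne', one_mul] at h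
        have hc : N z * Na y = Na y * N z := mul_comm _ _
        linarith [h]
      rw [abs_le]
      exact ⟨h2', h1'⟩
  -- decomposition of x in the basis (z₀, y)
  have hωyz₀ : ω y z₀ = Na y := hNay.symm
  have hdk : (y.1 * z₀.2 - y.2 * z₀.1) * k ≠ 0 := by
    rw [← hrep, hωyz₀]; exact hNaypos.ne'
  have hd : y.1 * z₀.2 - y.2 * z₀.1 ≠ 0 := fun h => hdk (by rw [h]; ring)
  set d : ℝ := y.1 * z₀.2 - y.2 * z₀.1 with hddef
  set a : ℝ := (y.1 * x.2 - y.2 * x.1) / d with hadef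
  set b : ℝ := (z₀.2 * x.1 - z₀.1 * x.2) / d with hbdef
  have hxdec : x = a • z₀ + b • y := by
    ext
    · simp only [Prod.fst_add, Prod.smul_fst, smul_eq_mul, hadef, hbdef]
      field_simp
      ring
    · simp only [Prod.snd_add, Prod.smul_snd, smul_eq_mul, hadef, hbdef]
      field_simp
      ring
  have hωyx : ω y x = a * Na y := by
    rw [hxdec, map_add, map_smul, map_smul, hωyz₀, hωyy, smul_eq_mul, smul_eq_mul]
    ring
  have hNz₀ : N z₀ = 1 := hz₀S
  -- the value at t = -b
  have hattain : N (x + (-b) • y) = |ω y x| / Na y := by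
    have : x + (-b) • y = a • z₀ := by
      rw [hxdec]; module
    rw [this, hN2, hNz₀, mul_one, hωyx, abs_mul, abs_of_pos hNaypos]
    field_simp
  -- compute the LHS
  have hωxy : |ω x y| = |ω y x| := by rw [hskew x y, abs_neg]
  have hLHS : |sm x y| = |ω y x| / Na y := by
    rw [hsm, hx, one_mul, abs_div, abs_of_pos hNaypos, hωxy]
  rw [hLHS]
  -- compute the infimum
  have himg : ∀ t : ℝ, |ω y x| / Na y ≤ N (x + t • y) := by
    intro t
    have h1 : ω y (x + t • y) = ω y x := by
      rw [map_add, map_smul, hωyy, smul_eq_mul]; ring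
    have h2 := hkey (x + t • y)
    rw [h1] at h2
    rw [div_le_iff₀ hNaypos]
    linarith [h2]
  apply le_antisymm
  · apply le_csInf
    · exact ⟨N (x + (0:ℝ) • y), ⟨0, Set.mem_univ 0, rfl⟩⟩
    · rintro r ⟨t, -, rfl⟩
      exact himg t
  · apply csInf_le
    · exact ⟨0, by rintro r ⟨t, -, rfl⟩; exact hN0 _⟩
    · exact ⟨-b, Set.mem_univ _, hattain⟩
end

section
/- For unit vectors x, y, |sm(x,y)| = 1 if and only if x is Birkhoff orthogonal to y, where sm(x,y) = ω(x,y)/(‖x‖·‖y‖ₐ). -/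
/-- for unit vectors `x, y`, `|sm(x,y)| = 1` iff `x` is Birkhoff
orthogonal to `y`, where `sm(x,y) = ω(x,y)/(‖x‖·‖y‖ₐ)`. -/
theorem abs_sm_eq_one_iff_birkhoff
    (ω : (ℝ × ℝ) →ₗ[ℝ] (ℝ × ℝ) →ₗ[ℝ] ℝ)
    (hskew : ∀ x y, ω x y = - ω y x)
    (hnondeg : ∀ x, (∀ y, ω x y = 0) → x = 0)
    (N : ℝ × ℝ → ℝ)
    (hN0 : ∀ x, 0 ≤ N x)
    (hN1 : ∀ x, N x = 0 ↔ x = 0)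
    (hN2 : ∀ (a : ℝ) (x : ℝ × ℝ), N (a • x) = |a| * N x)
    (hN3 : ∀ x y, N (x + y) ≤ N x + N y)
    (Na : ℝ × ℝ → ℝ)
    (hNa : ∀ x, Na x = sSup ((fun y => ω x y) '' {y | N y = 1}))
    (sm : (ℝ × ℝ) → (ℝ × ℝ) → ℝ)
    (hsm : ∀ x y, sm x y = ω x y / (N x * Na y))
    (x y : ℝ × ℝ) (hx : N x = 1) (hy : N y = 1) :
    |sm x y| = 1 ↔ (∀ t : ℝ, N x ≤ N (x + t • y)) := by
  have hself : ∀ z, ω z z = 0 := fun z => by have := hskew z z; linarith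
  have hN00 : N (0 : ℝ × ℝ) = 0 := (hN1 0).mpr rfl
  set S : Set ℝ := (fun z => ω y z) '' {z | N z = 1} with hS
  have hSne : S.Nonempty := ⟨ω y x, ⟨x, hx, rfl⟩⟩
  have hNax : Na y = sSup S := hNa y
  have hmemneg : ∀ z : ℝ × ℝ, N z = 1 → N (-z) = 1 := by
    intro z hz
    have : (-z : ℝ × ℝ) = (-1 : ℝ) • z := by simp
    rw [this, hN2]; simp [hz]
  constructor
  · -- |sm x y| = 1 → Birkhoff
    intro h1
    by_cases bdd : BddAbove S
    · -- bounded case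
      have hge : ∀ z, N z = 1 → |ω y z| ≤ Na y := by
        intro z hz
        have ha : ω y z ≤ sSup S := le_csSup bdd ⟨z, hz, rfl⟩
        have hb : ω y (-z) ≤ sSup S := le_csSup bdd ⟨-z, hmemneg z hz, rfl⟩
        rw [map_neg] at hb
        rw [hNax]
        exact abs_le.mpr ⟨by linarith, ha⟩
      have hNay0 : 0 ≤ Na y := le_trans (abs_nonneg _) (hge x hx)
      have hNayne : Na y ≠ 0 := by
        intro h0
        rw [hsm, hx, h0] at h1
        simp at h1
      have hNaypos : 0 < Na y := lt_of_le_of_ne hNay0 (Ne.symm hNayne)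
      have habs : |ω x y| = Na y := by
        rw [hsm, hx, one_mul, abs_div, abs_of_nonneg hNay0] at h1
        field_simp at h1
        linarith [h1]
      intro t
      set z := x + t • y with hz
      have hωyz : ω y z = ω y x := by
        rw [hz, map_add, map_smul, hself, smul_eq_mul]; ring
      have hzne : z ≠ 0 := by
        intro h0
        have : ω y x = 0 := by rw [← hωyz, h0, map_zero]
        have : ω x y = 0 := by rw [hskew x y, this, neg_zero]
        rw [this] at habs
        simp at habs
        exact hNayne habs.symm
      have hNz : 0 < N z := lt_of_le_of_ne (hN0 z) (fun h => hzne ((hN1 z).mp h.symm))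
      have hu : N ((N z)⁻¹ • z) = 1 := by
        rw [hN2, abs_of_pos (inv_pos.mpr hNz), inv_mul_cancel₀ (ne_of_gt hNz)]
      have := hge _ hu
      rw [map_smul, smul_eq_mul, abs_mul, abs_of_pos (inv_pos.mpr hNz), hωyz] at this
      have hωyx : |ω y x| = Na y := by
        rw [hskew y x, abs_neg]; exact habs
      rw [hωyx] at this
      -- (N z)⁻¹ * Na y ≤ Na y  ⇒  1 ≤ N z
      have h2 : (N z)⁻¹ ≤ 1 := by
        by_contra hcon
        push_neg at hcon
        nlinarith
      rw [hx]
      calc (1 : ℝ) = (N z)⁻¹ * N z := (inv_mul_cancel₀ (ne_of_gt hNz)).symm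
        _ ≤ 1 * N z := by nlinarith
        _ = N z := one_mul _
    · -- unbounded: Na y = 0, contradiction with |sm| = 1
      exfalso
      have h0 : Na y = 0 := by rw [hNax, Real.sSup_of_not_bddAbove bdd]
      rw [hsm, h0] at h1
      simp at h1
  · -- Birkhoff → |sm x y| = 1
    intro hB
    set e1 : ℝ × ℝ := (1, 0) with he1
    set e2 : ℝ × ℝ := (0, 1) with he2
    have hsplit : ∀ z : ℝ × ℝ, z = z.1 • e1 + z.2 • e2 := by
      intro z; ext <;> simp [he1, he2]
    have hc : ω e1 e2 ≠ 0 := by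
      intro h
      have he10 : e1 = 0 := by
        apply hnondeg
        intro z
        rw [hsplit z, map_add, map_smul, map_smul, hself, h]
        simp
      rw [he1, Prod.ext_iff] at he10
      simp at he10
    have key : ∀ z w : ℝ × ℝ, ω z w = (z.1 * w.2 - z.2 * w.1) * ω e1 e2 := by
      intro z w
      have h21 : ω e2 e1 = -ω e1 e2 := hskew e2 e1
      conv_lhs => rw [hsplit z, hsplit w]
      simp only [map_add, map_smul, LinearMap.add_apply, LinearMap.smul_apply,
        smul_eq_mul, hself, h21]
      ring
    have hx0 : x ≠ 0 := by
      intro h; rw [h, hN00] at hx; exact absurd hx (by norm_num)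
    set d : ℝ := x.1 * y.2 - x.2 * y.1 with hd
    -- d ≠ 0, else y = s • x and Birkhoff fails
    have hdne : d ≠ 0 := by
      intro hd0
      have hdep : ∃ s : ℝ, y = s • x := by
        by_cases h1 : x.1 ≠ 0
        · refine ⟨y.1 / x.1, ?_⟩
          have hy2 : y.2 = y.1 / x.1 * x.2 := by
            field_simp
            nlinarith [hd0]
          ext
          · simp only [Prod.smul_fst, smul_eq_mul]
            exact (div_mul_cancel₀ y.1 h1).symm
          · simp only [Prod.smul_snd, smul_eq_mul]
            rw [hy2]
        · push_neg at h1
          have h2 : x.2 ≠ 0 := by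
            intro h2'
            exact hx0 (Prod.ext h1 h2')
          refine ⟨y.2 / x.2, ?_⟩
          have hy1 : y.1 = y.2 / x.2 * x.1 := by
            field_simp
            nlinarith [hd0]
          ext
          · simp only [Prod.smul_fst, smul_eq_mul]
            rw [hy1]
          · simp only [Prod.smul_snd, smul_eq_mul]
            exact (div_mul_cancel₀ y.2 h2).symm
      obtain ⟨s, hsy⟩ := hdep
      have hs1 : |s| = 1 := by
        have := hy
        rw [hsy, hN2, hx, mul_one] at this
        exact this
      have hzero : x + (-s) • y = 0 := by
        rw [hsy, smul_smul]
        have hss : s * s = 1 := by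
          rcases abs_eq (by norm_num : (0:ℝ) ≤ 1) |>.mp hs1 with h | h <;> rw [h] <;> ring
        have : -s * s = -1 := by rw [neg_mul, hss]
        rw [this]
        module
      have := hB (-s)
      rw [hzero, hN00, hx] at this
      norm_num at this
    have hωxyne : ω x y ≠ 0 := by
      rw [key x y]
      exact mul_ne_zero hdne hc
    -- upper bound for all elements of S
    have hub : ∀ w ∈ S, w ≤ |ω x y| := by
      rintro w ⟨z, hz1, rfl⟩
      have hz1 : N z = 1 := hz1
      set a : ℝ := (z.1 * y.2 - z.2 * y.1) / d with ha
      set b : ℝ := (x.1 * z.2 - x.2 * z.1) / d with hb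
      have hzab : z = a • x + b • y := by
        ext
        · simp only [Prod.fst_add, Prod.smul_fst, smul_eq_mul, ha, hb]
          field_simp
          ring
        · simp only [Prod.snd_add, Prod.smul_snd, smul_eq_mul, ha, hb]
          field_simp
          ring
      have hωyz : ω y z = -(a * ω x y) := by
        rw [hzab, map_add, map_smul, map_smul, hself, hskew y x]
        simp [smul_eq_mul]
      have haabs : |a| ≤ 1 := by
        by_cases ha0 : a = 0
        · simp [ha0]
        · have hrepr : a⁻¹ • z = x + (b / a) • y := by
            rw [hzab, smul_add, smul_smul, smul_smul, inv_mul_cancel₀ ha0, one_smul,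
              inv_mul_eq_div]
          have hB' := hB (b / a)
          rw [hx, ← hrepr, hN2, hz1, mul_one] at hB'
          have hapos : 0 < |a| := abs_pos.mpr ha0
          have h2 : |a| * 1 ≤ |a| * |a|⁻¹ := by
            rw [abs_inv] at hB'
            exact mul_le_mul_of_nonneg_left hB' (abs_nonneg a)
          rw [mul_inv_cancel₀ (ne_of_gt hapos), mul_one] at h2
          exact h2
      calc ω y z ≤ |ω y z| := le_abs_self _
        _ = |a| * |ω x y| := by rw [hωyz, abs_neg, abs_mul]
        _ ≤ 1 * |ω x y| := mul_le_mul_of_nonneg_right haabs (abs_nonneg _)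
        _ = |ω x y| := one_mul _
    have bdd : BddAbove S := ⟨|ω x y|, fun w hw => hub w hw⟩
    have hle : Na y ≤ |ω x y| := by
      rw [hNax]; exact csSup_le hSne hub
    have hge : |ω x y| ≤ Na y := by
      have h1 : ω y x ≤ sSup S := le_csSup bdd ⟨x, hx, rfl⟩
      have h2 : ω y (-x) ≤ sSup S := le_csSup bdd ⟨-x, hmemneg x hx, rfl⟩
      rw [map_neg] at h2
      rw [hskew x y, abs_neg, hNax]
      exact abs_le.mpr ⟨by linarith, h1⟩
    have hNay : Na y = |ω x y| := le_antisymm hle hge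
    rw [hsm, hx, one_mul, hNay, abs_div, abs_abs,
      div_self (abs_ne_zero.mpr hωxyne)]
end

section
/- Let φ : ℝ → ℝ² be a smooth parametrization of the unit circle of a smooth normed plane by arc-length, and ψ(t) = φ'(t)/ω(φ(t),φ'(t)) the dual parametrization of the anti-circle. If a smooth curve γ has γ'(t) = ρ(t)·φ'(t) with ρ smooth, then its evolute ξ(t) = γ(t) - ρ(t)·φ(t) satisfies ξ'(t) = (ρ'(t)/ω(ψ(t),ψ'(t)))·ψ'(t); in particular ξ'(t) is parallel to ψ'(t). -/
theorem HasDerivAt.sub_smul_of_hasDerivAt_eq_smul {𝕜 E : Type*} [NontriviallyNormedField 𝕜]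
    [NormedAddCommGroup E] [NormedSpace 𝕜 E] {γ φ : 𝕜 → E} {ρ : 𝕜 → 𝕜} {φ' : E} {ρ' t : 𝕜}
    (hγ : HasDerivAt γ (ρ t • φ') t) (hρ : HasDerivAt ρ ρ' t) (hφ : HasDerivAt φ φ' t) :
    HasDerivAt (fun s => γ s - ρ s • φ s) (-(ρ' • φ t)) t :=
  (hγ.sub (hρ.smul hφ)).congr_deriv (sub_add_cancel_left _ _)

theorem evolute_derivative_general
    (ω : (ℝ × ℝ) →ₗ[ℝ] (ℝ × ℝ) →ₗ[ℝ] ℝ)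
    (φ ψ γ : ℝ → ℝ × ℝ) (φd ψd : ℝ → ℝ × ℝ) (ρ ρd : ℝ → ℝ)
    (hφ : ∀ t, HasDerivAt φ (φd t) t)
    (hρ : ∀ t, HasDerivAt ρ (ρd t) t)
    (hdual : ∀ t, φ t = -((ω (ψ t) (ψd t))⁻¹) • ψd t)
    (hγ : ∀ t, HasDerivAt γ (ρ t • φd t) t)
    (t : ℝ) :
    HasDerivAt (fun s => γ s - ρ s • φ s) ((ρd t / ω (ψ t) (ψd t)) • ψd t) t := by
  refine ((hγ t).sub_smul_of_hasDerivAt_eq_smul (hρ t) (hφ t)).congr_deriv ?_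
  rw [hdual t, smul_smul, ← neg_smul, mul_neg, neg_neg, div_eq_mul_inv]

/-- the evolute `ξ(t) = γ(t) - ρ(t)·φ(t)` of a curve `γ` with
`γ'(t) = ρ(t)·φ'(t)` satisfies `ξ'(t) = (ρ'(t)/ω(ψ(t),ψ'(t)))·ψ'(t)`, where
`ψ(t) = φ'(t)/ω(φ(t),φ'(t))` is the dual parametrization of the anti-circle. -/
theorem evolute_derivative
    (ω : (ℝ × ℝ) →ₗ[ℝ] (ℝ × ℝ) →ₗ[ℝ] ℝ)
    (hskew : ∀ x y, ω x y = - ω y x)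
    (hnondeg : ∀ x, (∀ y, ω x y = 0) → x = 0)
    (φ ψ γ : ℝ → ℝ × ℝ) (φd ψd : ℝ → ℝ × ℝ) (ρ ρd : ℝ → ℝ)
    (hφ : ∀ t, HasDerivAt φ (φd t) t)
    (hψ : ∀ t, HasDerivAt ψ (ψd t) t)
    (hρ : ∀ t, HasDerivAt ρ (ρd t) t)
    (hψdef : ∀ t, ψ t = (ω (φ t) (φd t))⁻¹ • φd t)
    (hdual : ∀ t, φ t = -((ω (ψ t) (ψd t))⁻¹) • ψd t)
    (hγ : ∀ t, HasDerivAt γ (ρ t • φd t) t)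
    (t : ℝ) :
    HasDerivAt (fun s => γ s - ρ s • φ s) ((ρd t / ω (ψ t) (ψd t)) • ψd t) t :=
  evolute_derivative_general ω φ ψ γ φd ψd ρ ρd hφ hρ hdual hγ t
end

section
/- Let ψ : ℝ → ℝ² be a smooth curve with ω(ψ(t),ψ'(t)) = 1 for all t, and set φ(t) = ψ'(t) and f(t) = ω(φ(t),φ'(t)). Then the functions u₁(t) := ω(ψ(t), ψ'(0)) and u₂(t) := -ω(ψ(t), ψ(0)) are solutions of the Hill equation u'' + f·u = 0, and they are linearly independent. -/
/-- if `ψ` is smooth with `ω(ψ,ψ') ≡ 1`, `φ = ψ'` and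
`f = ω(φ,φ')`, then `u₁(t) = ω(ψ(t),ψ'(0))` and `u₂(t) = -ω(ψ(t),ψ(0))` are
linearly independent solutions of the Hill equation `u'' + f·u = 0`. -/
theorem hill_solutions_from_anticircle
    (ω : (ℝ × ℝ) →ₗ[ℝ] (ℝ × ℝ) →ₗ[ℝ] ℝ)
    (hskew : ∀ x y, ω x y = - ω y x)
    (hnondeg : ∀ x, (∀ y, ω x y = 0) → x = 0)
    (ψ : ℝ → ℝ × ℝ) (hψ : ContDiff ℝ (⊤ : ℕ∞) ψ)
    (hunit : ∀ t, ω (ψ t) (deriv ψ t) = 1)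
    (φ : ℝ → ℝ × ℝ) (hφ : ∀ t, φ t = deriv ψ t)
    (f : ℝ → ℝ) (hf : ∀ t, f t = ω (φ t) (deriv φ t))
    (u₁ u₂ : ℝ → ℝ)
    (hu₁ : ∀ t, u₁ t = ω (ψ t) (deriv ψ 0))
    (hu₂ : ∀ t, u₂ t = -(ω (ψ t) (ψ 0))) :
    (∀ t, deriv (deriv u₁) t + f t * u₁ t = 0) ∧
    (∀ t, deriv (deriv u₂) t + f t * u₂ t = 0) ∧
    LinearIndependent ℝ ![u₁, u₂] := by
  classical
  -- ω as a continuous bilinear map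
  set Ω : (ℝ × ℝ) →L[ℝ] (ℝ × ℝ) →L[ℝ] ℝ :=
    LinearMap.toContinuousLinearMap
      (((LinearMap.toContinuousLinearMap :
          ((ℝ × ℝ) →ₗ[ℝ] ℝ) ≃ₗ[ℝ] ((ℝ × ℝ) →L[ℝ] ℝ)) : ((ℝ × ℝ) →ₗ[ℝ] ℝ) →ₗ[ℝ] ((ℝ × ℝ) →L[ℝ] ℝ)).comp ω)
    with hΩdef
  have hΩ : ∀ x y, Ω x y = ω x y := fun x y => rfl
  -- differentiability facts
  have hψ1 : Differentiable ℝ ψ := hψ.differentiable (by simp)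
  have hψ'1 : Differentiable ℝ (deriv ψ) :=
    ((contDiff_infty_iff_deriv.mp (hψ.of_le (by simp))).2).differentiable (by simp)
  have hd1 : ∀ t, HasDerivAt ψ (deriv ψ t) t := fun t => (hψ1 t).hasDerivAt
  have hd2 : ∀ t, HasDerivAt (deriv ψ) (deriv (deriv ψ) t) t := fun t => (hψ'1 t).hasDerivAt
  -- derivative of bilinear expressions
  have hbil : ∀ (a b : ℝ → ℝ × ℝ) (t : ℝ) (a' b' : ℝ × ℝ), HasDerivAt a a' t →
      HasDerivAt b b' t →
      HasDerivAt (fun s => ω (a s) (b s)) (ω a' (b t) + ω (a t) b') t := by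
    intro a b t a' b' ha hb
    have h1 : HasDerivAt (fun s => Ω (a s)) (Ω a') t :=
      (Ω.hasFDerivAt (x := a t)).comp_hasDerivAt t ha
    exact h1.clm_apply hb
  have hxx : ∀ x : ℝ × ℝ, ω x x = 0 := by
    intro x; have := hskew x x; linarith
  -- ω(ψ, ψ'') = 0
  have horth : ∀ t, ω (ψ t) (deriv (deriv ψ) t) = 0 := by
    intro t
    have hc := hbil ψ (deriv ψ) t _ _ (hd1 t) (hd2 t)
    have hconst : (fun s => ω (ψ s) (deriv ψ s)) = fun _ => (1 : ℝ) := funext hunit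
    rw [hconst] at hc
    have h0 := hc.unique (hasDerivAt_const t 1)
    have := hxx (deriv ψ t)
    linarith
  -- coordinate formula for ω
  have hform : ∀ x y : ℝ × ℝ,
      ω x y = (ω (1, 0) (0, 1)) * (x.1 * y.2 - x.2 * y.1) := by
    intro x y
    have hx : x = x.1 • ((1 : ℝ), (0 : ℝ)) + x.2 • ((0 : ℝ), (1 : ℝ)) := by
      ext <;> simp
    have hy : y = y.1 • ((1 : ℝ), (0 : ℝ)) + y.2 • ((0 : ℝ), (1 : ℝ)) := by
      ext <;> simp
    have h11 : ω ((1 : ℝ), (0 : ℝ)) ((1 : ℝ), (0 : ℝ)) = 0 := hxx _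
    have h22 : ω ((0 : ℝ), (1 : ℝ)) ((0 : ℝ), (1 : ℝ)) = 0 := hxx _
    have h21 : ω ((0 : ℝ), (1 : ℝ)) ((1 : ℝ), (0 : ℝ)) = -ω ((1 : ℝ), (0 : ℝ)) ((0 : ℝ), (1 : ℝ)) :=
      hskew _ _
    conv_lhs => rw [hx, hy]
    simp only [map_add, map_smul, LinearMap.add_apply, LinearMap.smul_apply, smul_eq_mul,
      h11, h22, h21]
    ring
  -- f in terms of ψ
  have hfψ : ∀ t, f t = ω (deriv ψ t) (deriv (deriv ψ) t) := by
    intro t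
    have hφfun : φ = deriv ψ := funext hφ
    rw [hf t, hφfun]
  -- ψ'' = -f • ψ
  have hsecond : ∀ t, deriv (deriv ψ) t = (-(f t)) • ψ t := by
    intro t
    have h1 := horth t
    have h2 := hunit t
    have h3 := hfψ t
    rw [hform] at h1 h2 h3
    have e1 : (deriv (deriv ψ) t).1 = -(f t) * (ψ t).1 := by
      linear_combination (deriv ψ t).1 * h1 - (deriv (deriv ψ) t).1 * h2 + (ψ t).1 * h3
    have e2 : (deriv (deriv ψ) t).2 = -(f t) * (ψ t).2 := by
      linear_combination (deriv ψ t).2 * h1 - (deriv (deriv ψ) t).2 * h2 + (ψ t).2 * h3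
    have : deriv (deriv ψ) t = ((-(f t) * (ψ t).1, -(f t) * (ψ t).2) : ℝ × ℝ) := by
      rw [Prod.ext_iff]; exact ⟨e1, e2⟩
    rw [this]; rfl
  -- general solution lemma
  have hsol : ∀ (v : ℝ × ℝ) (t : ℝ),
      deriv (deriv (fun s => ω (ψ s) v)) t + f t * ω (ψ t) v = 0 := by
    intro v t
    have hdv : ∀ s : ℝ, HasDerivAt (fun r => ω (ψ r) v) (ω (deriv ψ s) v) s := by
      intro s
      have := hbil ψ (fun _ => v) s (deriv ψ s) 0 (hd1 s) (hasDerivAt_const s v)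
      simpa using this
    have hder1 : deriv (fun s => ω (ψ s) v) = fun s => ω (deriv ψ s) v :=
      funext fun s => (hdv s).deriv
    rw [hder1]
    have hdv2 : HasDerivAt (fun s => ω (deriv ψ s) v) (ω (deriv (deriv ψ) t) v) t := by
      have := hbil (deriv ψ) (fun _ => v) t (deriv (deriv ψ) t) 0 (hd2 t) (hasDerivAt_const t v)
      simpa using this
    rw [hdv2.deriv, hsecond t, map_smul]
    simp only [LinearMap.smul_apply, smul_eq_mul]
    ring
  have hu₁fun : u₁ = fun t => ω (ψ t) (deriv ψ 0) := funext hu₁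
  have hu₂fun : u₂ = fun t => -(ω (ψ t) (ψ 0)) := funext hu₂
  refine ⟨?_, ?_, ?_⟩
  · intro t
    rw [hu₁fun]
    exact hsol (deriv ψ 0) t
  · intro t
    rw [hu₂fun]
    have hneg1 : deriv (fun s => -(ω (ψ s) (ψ 0))) = fun s => -(deriv (fun r => ω (ψ r) (ψ 0)) s) :=
      funext fun s => deriv.neg
    rw [hneg1]
    have hneg2 : deriv (fun s => -(deriv (fun r => ω (ψ r) (ψ 0)) s)) t
        = -(deriv (deriv (fun r => ω (ψ r) (ψ 0))) t) := deriv.neg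
    rw [hneg2]
    have := hsol (ψ 0) t
    beta_reduce
    linarith
  · rw [LinearIndependent.pair_iff]
    intro a b hab
    have hu10 : u₁ 0 = 1 := by rw [hu₁ 0]; exact hunit 0
    have hu20 : u₂ 0 = 0 := by rw [hu₂ 0, hxx]; ring
    have h0 := congrFun hab 0
    simp only [Pi.add_apply, Pi.smul_apply, smul_eq_mul, Pi.zero_apply, hu10, hu20] at h0
    have ha : a = 0 := by linarith
    -- u₂'(0) = 1
    have hdg : HasDerivAt (fun r => ω (ψ r) (ψ 0)) (ω (deriv ψ 0) (ψ 0)) 0 := by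
      have := hbil ψ (fun _ => ψ 0) 0 (deriv ψ 0) 0 (hd1 0) (hasDerivAt_const 0 (ψ 0))
      simpa using this
    have hu2d : HasDerivAt u₂ 1 0 := by
      have h := hdg.neg
      have hval : -(ω (deriv ψ 0) (ψ 0)) = 1 := by
        have := hskew (ψ 0) (deriv ψ 0)
        have := hunit 0
        linarith
      rw [hu₂fun]
      rw [← hval]
      exact h
    have hb : b = 0 := by
      have hzero : ∀ t, b * u₂ t = 0 := by
        intro t
        have := congrFun hab t
        simp only [Pi.add_apply, Pi.smul_apply, smul_eq_mul, Pi.zero_apply, ha] at this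
        linarith
      have h1 : HasDerivAt (fun t => b * u₂ t) (b * 1) 0 := hu2d.const_mul b
      have h2 : HasDerivAt (fun t => b * u₂ t) 0 0 := by
        have : (fun t => b * u₂ t) = fun _ => (0 : ℝ) := funext hzero
        rw [this]; exact hasDerivAt_const 0 0
      have := h1.unique h2
      linarith
    exact ⟨ha, hb⟩
end

section
/- Let f : ℝ → ℝ be continuous, c-periodic (c > 0), and satisfy f(αt) = f(t) for all t, where α > 0 and α ≠ 1. Then f is constant. -/
/-!
Invariance under `t ↦ β t` turns the period `c` into the periods `β⁻ⁿ c`; choosing `β > 1`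
(replace `α` by `α⁻¹` if necessary) these are arbitrarily small positive periods. The periods
of `f` form an additive subgroup of `ℝ`, which is therefore dense, and it is closed because `f`
is continuous; so every real number is a period of `f`.
-/

open Function Set

namespace Function

variable {α β : Type*}

def periodAddSubgroup [AddGroup α] (f : α → β) : AddSubgroup α where
  carrier := {c | Periodic f c}
  add_mem' := Periodic.add_period
  zero_mem' := fun x => by rw [add_zero]
  neg_mem' := Periodic.neg

theorem Periodic.inv_mul_of_forall_map_mul [DivisionSemiring α] {f : α → β} {c a : α}
    (h : Periodic f c) (hscale : ∀ x, f (a * x) = f x) : Periodic f (a⁻¹ * c) := by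
  simpa only [hscale] using h.const_mul a

theorem Periodic.inv_pow_mul_of_forall_map_mul [DivisionSemiring α] {f : α → β} {c a : α}
    (h : Periodic f c) (hscale : ∀ x, f (a * x) = f x) (n : ℕ) : Periodic f (a⁻¹ ^ n * c) := by
  induction n with
  | zero => simpa using h
  | succ n ih => simpa only [pow_succ', mul_assoc] using ih.inv_mul_of_forall_map_mul hscale

end Function

section Topology

variable {α β : Type*} [TopologicalSpace α] [TopologicalSpace β] [T2Space β] {f : α → β}

theorem Continuous.isClosed_setOf_periodic [Add α] [ContinuousAdd α] (hf : Continuous f) :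
    IsClosed {c | Periodic f c} := by
  simp only [Periodic, ofPred_forall]
  exact isClosed_iInter fun x =>
    isClosed_eq (hf.comp (continuous_const.add continuous_id)) continuous_const

theorem Continuous.eq_of_dense_setOf_periodic [AddGroup α] [ContinuousAdd α] (hf : Continuous f)
    (hd : Dense {c | Periodic f c}) (x y : α) : f x = f y := by
  have hperiod : Periodic f (-x + y) := hf.isClosed_setOf_periodic.closure_subset (hd _)
  simpa using (hperiod x).symm

end Topology

/-- a continuous `c`-periodic function (`c > 0`) satisfying
`f(αt) = f(t)` for all `t`, with `α > 0`, `α ≠ 1`, is constant. -/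
theorem periodic_scaling_invariant_constant
    (f : ℝ → ℝ) (hf : Continuous f)
    (c : ℝ) (hc : 0 < c) (hper : Function.Periodic f c)
    (α : ℝ) (hα : 0 < α) (hα1 : α ≠ 1)
    (hscale : ∀ t, f (α * t) = f t) :
    ∀ s t, f s = f t := by
  obtain ⟨β, hβ1, hβ⟩ : ∃ β : ℝ, 1 < β ∧ ∀ t, f (β * t) = f t := by
    rcases hα1.lt_or_gt with hlt | hgt
    · refine ⟨α⁻¹, (one_lt_inv₀ hα).2 hlt, fun t => ?_⟩
      rw [← hscale, mul_inv_cancel_left₀ hα.ne']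
    · exact ⟨α, hgt, hscale⟩
  have hsmall : ∀ ε > 0, ∃ p ∈ periodAddSubgroup f, p ∈ Ioo 0 ε := by
    intro ε hε
    obtain ⟨n, hn⟩ := exists_pow_lt_of_lt_one (div_pos hε hc) (inv_lt_one_of_one_lt₀ hβ1)
    exact ⟨β⁻¹ ^ n * c, hper.inv_pow_mul_of_forall_map_mul hβ n,
      by positivity, (lt_div_iff₀ hc).1 hn⟩
  exact hf.eq_of_dense_setOf_periodic ((periodAddSubgroup f).dense_of_not_isolated_zero hsmall)
end

section
/- Let f : ℝ → ℝ be continuous, strictly positive, and c-periodic (c > 0). Suppose u is a nonzero solution of u'' + f·u = 0 whose zeros are isolated, λ > 0 with λ ≠ 1, and the function v(t) = u(αt) (for some constant α) is a nonzero solution of v'' + λ·f·v = 0. Then f is constant. -/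
/-!
Substituting `v(t) = u(αt)` into the second equation gives `(λ f(t) - α² f(αt)) u(αt) = 0`.
The zeros of `u` are isolated, so `λ f(t) = α² f(αt)` on a dense set, hence everywhere by
continuity. At `t = 0` this forces `λ = α²`, so `f(αt) = f(t)` with `|α| ≠ 1`; iterating the
contraction `t ↦ α^{±1} t` towards `0` and using continuity at `0` shows that `f` is constant.
-/

open Filter Topology

theorem dense_setOf_of_eventually_nhdsNE {X : Type*} [TopologicalSpace X]
    [∀ x : X, (𝓝[≠] x).NeBot] {p : X → Prop} (h : ∀ x, ¬ p x → ∀ᶠ y in 𝓝[≠] x, p y) :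
    Dense {x | p x} := by
  intro x
  by_cases hx : p x
  · exact subset_closure hx
  · exact mem_closure_iff_frequently.2 ((h x hx).frequently.filter_mono nhdsWithin_le_nhds)

theorem dense_setOf_ne_zero_of_isolated_zeros {E : Type*} [Zero E] {u : ℝ → E}
    (hzeros : ∀ t, u t = 0 → ∃ ε > 0, ∀ s, s ≠ t → |s - t| < ε → u s ≠ 0) :
    Dense {t | u t ≠ 0} := by
  refine dense_setOf_of_eventually_nhdsNE fun t ht => ?_
  obtain ⟨ε, hε, hiso⟩ := hzeros t (not_not.1 ht)
  rw [eventually_nhdsWithin_iff, Metric.eventually_nhds_iff]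
  exact ⟨ε, hε, fun s hs hne => hiso s hne hs⟩

theorem deriv_deriv_comp_mul_left {𝕜 E : Type*} [NontriviallyNormedField 𝕜]
    [NormedAddCommGroup E] [NormedSpace 𝕜 E] (f : 𝕜 → E) (c x : 𝕜) :
    deriv (deriv (f <| c * ·)) x = c ^ 2 • deriv (deriv f) (c * x) := by
  have h : deriv (f <| c * ·) = fun y => c • deriv f (c * y) :=
    funext (deriv_comp_mul_left c f)
  rw [h, deriv_fun_const_smul_field, deriv_comp_mul_left c (deriv f), smul_smul, sq]

theorem apply_eq_apply_zero_of_forall_apply_mul_eq {X : Type*} [TopologicalSpace X] [T2Space X]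
    {f : ℝ → X} {b : ℝ} (hf : Continuous f) (hb : |b| < 1) (h : ∀ t, f (b * t) = f t) (t : ℝ) :
    f t = f 0 := by
  have hpow : ∀ n : ℕ, f (b ^ n * t) = f t := by
    intro n
    induction n with
    | zero => rw [pow_zero, one_mul]
    | succ n ih => rw [pow_succ', mul_assoc, h, ih]
  have hlim : Tendsto (fun n : ℕ => f (b ^ n * t)) atTop (𝓝 (f 0)) := by
    have := (tendsto_pow_atTop_nhds_zero_of_abs_lt_one hb).mul_const t
    rw [zero_mul] at this
    exact (hf.tendsto 0).comp this
  simp only [hpow] at hlim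
  exact tendsto_nhds_unique tendsto_const_nhds hlim

theorem eq_of_forall_apply_mul_eq {X : Type*} [TopologicalSpace X] [T2Space X]
    {f : ℝ → X} {a : ℝ} (hf : Continuous f) (ha : |a| ≠ 1) (h : ∀ t, f (a * t) = f t)
    (s t : ℝ) : f s = f t := by
  suffices ∃ b : ℝ, |b| < 1 ∧ ∀ t, f (b * t) = f t by
    obtain ⟨b, hb, hbf⟩ := this
    rw [apply_eq_apply_zero_of_forall_apply_mul_eq hf hb hbf s,
      apply_eq_apply_zero_of_forall_apply_mul_eq hf hb hbf t]
  rcases ha.lt_or_gt with ha | ha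
  · exact ⟨a, ha, h⟩
  · have ha0 : a ≠ 0 := by rintro rfl; norm_num at ha
    refine ⟨a⁻¹, by rwa [abs_inv, inv_lt_one₀ (by positivity)], fun t => ?_⟩
    rw [← h, mul_inv_cancel_left₀ ha0]

def IsHillSolution (q u : ℝ → ℝ) : Prop :=
  ∀ t, deriv (deriv u) t + q t * u t = 0

namespace IsHillSolution

variable {q u : ℝ → ℝ}

theorem eq_zero_of_const {k t : ℝ} (h : IsHillSolution q fun _ => k) (hq : q t ≠ 0) : k = 0 := by
  have ht := h t
  simp only [deriv_const', zero_add] at ht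
  exact (mul_eq_zero.1 ht).resolve_left hq

theorem const_mul_eq_sq_mul_apply_mul {lam α : ℝ} (hq : Continuous q) (hα : α ≠ 0)
    (hdense : Dense {t | u t ≠ 0})
    (hu : IsHillSolution q u) (hv : IsHillSolution (fun t => lam * q t) (u <| α * ·)) (t : ℝ) :
    lam * q t = α ^ 2 * q (α * t) := by
  have hD : Dense ((α * ·) ⁻¹' {s | u s ≠ 0}) :=
    hdense.preimage (Homeomorph.mulLeft₀ α hα).isOpenMap
  refine congrFun (Continuous.ext_on hD (f := fun t => lam * q t) (g := fun t => α ^ 2 * q (α * t))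
    (by fun_prop) (by fun_prop) fun s hs => ?_) t
  have hvs := hv s
  rw [deriv_deriv_comp_mul_left, smul_eq_mul] at hvs
  exact mul_right_cancel₀ hs (by linear_combination hvs - α ^ 2 * hu (α * s))

end IsHillSolution

theorem eigenvalue_reparametrization_forces_constant_general
    (f : ℝ → ℝ) (hf : Continuous f) (hpos : ∀ t, 0 < f t)
    (u : ℝ → ℝ)
    (hzeros : ∀ t, u t = 0 → ∃ ε > 0, ∀ s, s ≠ t → |s - t| < ε → u s ≠ 0)
    (hu : ∀ t, deriv (deriv u) t + f t * u t = 0)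
    (lam : ℝ) (hlam : 0 < lam) (hlam1 : lam ≠ 1)
    (α : ℝ)
    (v : ℝ → ℝ) (hv : ∀ t, v t = u (α * t)) (hvne : v ≠ 0)
    (hveq : ∀ t, deriv (deriv v) t + lam * f t * v t = 0) :
    ∀ s t, f s = f t := by
  obtain rfl : v = (u <| α * ·) := funext hv
  have hα : α ≠ 0 := by
    rintro rfl
    simp only [zero_mul] at hveq hvne
    exact hvne (funext fun _ => IsHillSolution.eq_zero_of_const hveq (mul_pos hlam (hpos 0)).ne')
  have hscale := IsHillSolution.const_mul_eq_sq_mul_apply_mul hf hα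
    (dense_setOf_ne_zero_of_isolated_zeros hzeros) hu hveq
  have hlam_eq : lam = α ^ 2 := by simpa [(hpos 0).ne'] using hscale 0
  have hinv : ∀ t, f (α * t) = f t := fun t =>
    (mul_left_cancel₀ hlam.ne' ((hscale t).trans (by rw [hlam_eq]))).symm
  have hα1 : |α| ≠ 1 := by
    rintro h
    exact hlam1 (by rw [hlam_eq, ← sq_abs, h, one_pow])
  exact eq_of_forall_apply_mul_eq hf hα1 hinv

/-- if `u` is a nonzero solution of `u'' + f·u = 0` with isolated
zeros and `v(t) = u(αt)` is a nonzero solution of `v'' + λ·f·v = 0` with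
`λ > 0`, `λ ≠ 1`, then `f` (continuous, positive, `c`-periodic) is constant. -/
theorem eigenvalue_reparametrization_forces_constant
    (f : ℝ → ℝ) (hf : Continuous f) (hpos : ∀ t, 0 < f t)
    (c : ℝ) (hc : 0 < c) (hper : Function.Periodic f c)
    (u : ℝ → ℝ) (hu2 : ContDiff ℝ 2 u) (hune : u ≠ 0)
    (hzeros : ∀ t, u t = 0 → ∃ ε > 0, ∀ s, s ≠ t → |s - t| < ε → u s ≠ 0)
    (hu : ∀ t, deriv (deriv u) t + f t * u t = 0)
    (lam : ℝ) (hlam : 0 < lam) (hlam1 : lam ≠ 1)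
    (α : ℝ)
    (v : ℝ → ℝ) (hv : ∀ t, v t = u (α * t)) (hvne : v ≠ 0)
    (hveq : ∀ t, deriv (deriv v) t + lam * f t * v t = 0) :
    ∀ s t, f s = f t :=
  eigenvalue_reparametrization_forces_constant_general f hf hpos u hzeros hu lam hlam hlam1 α v hv
    hvne hveq
end

section
/- Suppose ψ : ℝ mod L → ℝ² parametrizes the unit anti-circle of a normed plane by arc-length in the norm (ω(ψ,ψ') ≡ 1), and let m(t) be defined by ψ(t + m(t)) = ψ'(t)/‖ψ'(t)‖ₐ. If the plane is Radon (Birkhoff orthogonality is symmetric), then m(t) + m(t + m(t)) = L/2 for all t. -/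
private lemma pt_decomp (x : ℝ × ℝ) :
    x = x.1 • ((1:ℝ),(0:ℝ)) + x.2 • ((0:ℝ),(1:ℝ)) := by
  ext <;> simp

private lemma omega_self (ω : (ℝ × ℝ) →ₗ[ℝ] (ℝ × ℝ) →ₗ[ℝ] ℝ)
    (hskew : ∀ x y, ω x y = - ω y x) (x : ℝ × ℝ) : ω x x = 0 := by
  have := hskew x x; linarith

private lemma omega_form (ω : (ℝ × ℝ) →ₗ[ℝ] (ℝ × ℝ) →ₗ[ℝ] ℝ)
    (hskew : ∀ x y, ω x y = - ω y x) (x y : ℝ × ℝ) :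
    ω x y = (ω (1,0) (0,1)) * (x.1 * y.2 - x.2 * y.1) := by
  have hx := pt_decomp x
  have hy := pt_decomp y
  have h21 : ω ((0:ℝ),(1:ℝ)) ((1:ℝ),(0:ℝ)) = - ω ((1:ℝ),(0:ℝ)) ((0:ℝ),(1:ℝ)) :=
    hskew _ _
  have h11 := omega_self ω hskew ((1:ℝ),(0:ℝ))
  have h22 := omega_self ω hskew ((0:ℝ),(1:ℝ))
  conv_lhs => rw [hx, hy]
  simp only [map_add, map_smul, LinearMap.add_apply, LinearMap.smul_apply,
    smul_eq_mul, h21, h11, h22]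
  ring

private lemma omega_ne (ω : (ℝ × ℝ) →ₗ[ℝ] (ℝ × ℝ) →ₗ[ℝ] ℝ)
    (hskew : ∀ x y, ω x y = - ω y x)
    (hnondeg : ∀ x, (∀ y, ω x y = 0) → x = 0) : ω (1,0) (0,1) ≠ 0 := by
  intro h0
  have h : ((1:ℝ),(0:ℝ)) = (0 : ℝ × ℝ) := by
    apply hnondeg
    intro y
    rw [omega_form ω hskew, h0]; ring
  have : (1:ℝ) = 0 := congrArg Prod.fst h
  norm_num at this

private lemma omega_parallel (ω : (ℝ × ℝ) →ₗ[ℝ] (ℝ × ℝ) →ₗ[ℝ] ℝ)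
    (hskew : ∀ x y, ω x y = - ω y x)
    (hnondeg : ∀ x, (∀ y, ω x y = 0) → x = 0)
    (v w : ℝ × ℝ) (hv : v ≠ 0) (h : ω v w = 0) : ∃ r : ℝ, w = r • v := by
  have ha := omega_ne ω hskew hnondeg
  rw [omega_form ω hskew] at h
  have hcross : v.1 * w.2 - v.2 * w.1 = 0 := by
    rcases mul_eq_zero.1 h with h' | h'
    · exact absurd h' ha
    · exact h'
  have hv' : v.1 ≠ 0 ∨ v.2 ≠ 0 := by
    by_contra hc
    push_neg at hc
    exact hv (Prod.ext hc.1 hc.2)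
  rcases hv' with h1 | h2
  · refine ⟨w.1 / v.1, Prod.ext ?_ ?_⟩
    · show w.1 = w.1 / v.1 * v.1
      field_simp
    · show w.2 = w.1 / v.1 * v.2
      field_simp
      linarith
  · refine ⟨w.2 / v.2, Prod.ext ?_ ?_⟩
    · show w.1 = w.2 / v.2 * v.1
      field_simp
      linarith
    · show w.2 = w.2 / v.2 * v.2
      field_simp

private lemma omega_rep (ω : (ℝ × ℝ) →ₗ[ℝ] (ℝ × ℝ) →ₗ[ℝ] ℝ)
    (hskew : ∀ x y, ω x y = - ω y x)
    (hnondeg : ∀ x, (∀ y, ω x y = 0) → x = 0)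
    (g : (ℝ × ℝ) →ₗ[ℝ] ℝ) : ∃ w, ∀ x, g x = ω w x := by
  have ha := omega_ne ω hskew hnondeg
  set a := ω (1,0) (0,1) with hadef
  refine ⟨(g (0,1) / a, - g (1,0) / a), fun x => ?_⟩
  rw [omega_form ω hskew]
  have hg : g x = x.1 * g (1,0) + x.2 * g (0,1) := by
    conv_lhs => rw [pt_decomp x]
    simp only [map_add, map_smul, smul_eq_mul]
  rw [hg, ← hadef]
  field_simp
  ring

private lemma hb_ext (S : ℝ × ℝ → ℝ)
    (hhom : ∀ c : ℝ, 0 < c → ∀ x, S (c • x) = c * S x)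
    (hsub : ∀ x y, S (x + y) ≤ S x + S y)
    (hpos : ∀ x, 0 ≤ S x)
    (v : ℝ × ℝ) (hv : v ≠ 0) :
    ∃ g : (ℝ × ℝ) →ₗ[ℝ] ℝ, g v = S v ∧ ∀ x, g x ≤ S x := by
  have hS0 : S 0 = 0 := by
    have := hhom 2 (by norm_num) 0
    simp at this
    linarith
  set f : (ℝ × ℝ) →ₗ.[ℝ] ℝ := LinearPMap.mkSpanSingleton v (S v) hv with hf
  have hdom : ∀ z : f.domain, f z ≤ S z := by
    rintro ⟨z, hz⟩
    have hz' : z ∈ Submodule.span ℝ {v} := hz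
    obtain ⟨r, hr⟩ := Submodule.mem_span_singleton.1 hz'
    have happ : f ⟨z, hz⟩ = r * S v := by
      have h2 : f ⟨r • v, hr ▸ hz⟩ = r • (S v) :=
        LinearPMap.mkSpanSingleton'_apply v (S v) _ r _
      simp only [smul_eq_mul] at h2
      rw [← h2]
      congr 1
      exact Subtype.ext hr.symm
    rw [happ]
    rcases lt_trichotomy r 0 with h | h | h
    · have : r * S v ≤ 0 := mul_nonpos_of_nonpos_of_nonneg h.le (hpos v)
      exact this.trans (hpos z)
    · subst h
      have hz0 : z = 0 := by rw [← hr]; simp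
      show 0 * S v ≤ S z
      rw [hz0, hS0]
      simp
    · have h4 : S z = r * S v := by rw [← hr, hhom r h]
      show r * S v ≤ S z
      rw [h4]
  obtain ⟨g, hg1, hg2⟩ := exists_extension_of_le_sublinear f S hhom hsub hdom
  refine ⟨g, ?_, hg2⟩
  have hmem : v ∈ f.domain := Submodule.mem_span_singleton_self v
  have h3 := hg1 ⟨v, hmem⟩
  rw [h3]
  exact LinearPMap.mkSpanSingleton_apply ℝ ℝ hv (S v)

private lemma norm_bound (N : ℝ × ℝ → ℝ)
    (hN1 : ∀ x, N x = 0 ↔ x = 0)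
    (hN2 : ∀ (a : ℝ) (x : ℝ × ℝ), N (a • x) = |a| * N x)
    (hN3 : ∀ x y, N (x + y) ≤ N x + N y) :
    ∃ K : ℝ, 0 < K ∧ ∀ y, N y ≤ 1 → ‖y‖ ≤ K := by
  have hN0' : ∀ x, 0 ≤ N x := by
    intro x
    have h1 := hN3 x (-x)
    have h2 : N (-x) = N x := by
      have := hN2 (-1) x
      simpa using this
    have h3 : N (x + -x) = 0 := by simp [(hN1 0).2 rfl]
    rw [h2, h3] at h1
    linarith
  -- upper bound : N z ≤ C * ‖z‖
  set C := N (1,0) + N (0,1) with hC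
  have hub : ∀ z : ℝ × ℝ, N z ≤ C * ‖z‖ := by
    intro z
    have hd : z = z.1 • ((1:ℝ),(0:ℝ)) + z.2 • ((0:ℝ),(1:ℝ)) := by ext <;> simp
    calc N z ≤ N (z.1 • ((1:ℝ),(0:ℝ))) + N (z.2 • ((0:ℝ),(1:ℝ))) := by
          conv_lhs => rw [hd]
          exact hN3 _ _
      _ = |z.1| * N (1,0) + |z.2| * N (0,1) := by rw [hN2, hN2]
      _ ≤ ‖z‖ * N (1,0) + ‖z‖ * N (0,1) := by
          have h1 : |z.1| ≤ ‖z‖ := by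
            have := norm_fst_le z
            simpa using this
          have h2 : |z.2| ≤ ‖z‖ := by
            have := norm_snd_le z
            simpa using this
          have := hN0' ((1:ℝ),(0:ℝ))
          have := hN0' ((0:ℝ),(1:ℝ))
          nlinarith
      _ = C * ‖z‖ := by ring
  -- continuity
  have hCpos : 0 ≤ C := by
    have := hN0' ((1:ℝ),(0:ℝ)); have := hN0' ((0:ℝ),(1:ℝ)); linarith
  have hcont : Continuous N := by
    apply (LipschitzWith.of_dist_le_mul (K := ⟨C, hCpos⟩) (f := N) ?_).continuous
    intro x y
    have k1 : N x ≤ N y + N (x - y) := by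
      have := hN3 y (x - y)
      simpa using this
    have k2 : N y ≤ N x + N (y - x) := by
      have := hN3 x (y - x)
      simpa using this
    have k3 : N (y - x) = N (x - y) := by
      have := hN2 (-1) (x - y)
      simpa [neg_sub] using this
    have k4 : N (x - y) ≤ C * ‖x - y‖ := hub _
    have : dist (N x) (N y) ≤ N (x - y) := by
      rw [Real.dist_eq, abs_le]
      constructor <;> [linarith; linarith]
    refine this.trans (k4.trans ?_)
    rw [dist_eq_norm]
    exact le_of_eq rfl
  -- min on sphere
  have hsne : (Metric.sphere (0 : ℝ × ℝ) 1).Nonempty := by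
    refine ⟨((1:ℝ),(0:ℝ)), ?_⟩
    simp [Prod.norm_def]
  obtain ⟨ymin, hymem, hymin⟩ :=
    (isCompact_sphere (0 : ℝ × ℝ) 1).exists_isMinOn hsne hcont.continuousOn
  have hynorm : ‖ymin‖ = 1 := by simpa using hymem
  have hyne : ymin ≠ 0 := by
    intro h0
    rw [h0] at hynorm
    simp at hynorm
  set c := N ymin with hc
  have hcpos : 0 < c := by
    rcases lt_or_eq_of_le (hN0' ymin) with h | h
    · exact h
    · exact absurd ((hN1 ymin).1 h.symm) hyne
  refine ⟨c⁻¹, inv_pos.2 hcpos, ?_⟩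
  intro y hy
  rcases eq_or_ne y 0 with rfl | hy0
  · simp
    positivity
  · have hny : (0:ℝ) < ‖y‖ := norm_pos_iff.2 hy0
    have humem : ‖y‖⁻¹ • y ∈ Metric.sphere (0 : ℝ × ℝ) 1 := by
      simp [norm_smul, abs_of_pos (inv_pos.2 hny), inv_mul_cancel₀ hny.ne']
    have hle := hymin humem
    have : c ≤ ‖y‖⁻¹ * N y := by
      have := hN2 ‖y‖⁻¹ y
      rw [abs_of_pos (inv_pos.2 hny)] at this
      calc c ≤ N (‖y‖⁻¹ • y) := hle
        _ = ‖y‖⁻¹ * N y := this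
    have hcy : c * ‖y‖ ≤ N y := by
      have h5 : c * ‖y‖ ≤ (‖y‖⁻¹ * N y) * ‖y‖ :=
        mul_le_mul_of_nonneg_right this hny.le
      rw [mul_comm (‖y‖⁻¹) (N y), mul_assoc, inv_mul_cancel₀ hny.ne', mul_one] at h5
      exact h5
    have h6 : c * ‖y‖ ≤ 1 := hcy.trans hy
    calc ‖y‖ = c⁻¹ * (c * ‖y‖) := by field_simp
      _ ≤ c⁻¹ * 1 := mul_le_mul_of_nonneg_left h6 (inv_pos.2 hcpos).le
      _ = c⁻¹ := mul_one _
set_option maxHeartbeats 1000000 in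
/-- in a Radon plane (Birkhoff orthogonality symmetric), the
function `m` with `ψ(t + m(t)) = ψ'(t)/‖ψ'(t)‖ₐ` along the arc-length
parametrization `ψ` of the unit anti-circle satisfies
`m(t) + m(t + m(t)) = L/2`. -/
theorem radon_m_iteration
    (ω : (ℝ × ℝ) →ₗ[ℝ] (ℝ × ℝ) →ₗ[ℝ] ℝ)
    (hskew : ∀ x y, ω x y = - ω y x)
    (hnondeg : ∀ x, (∀ y, ω x y = 0) → x = 0)
    (N : ℝ × ℝ → ℝ)
    (hN0 : ∀ x, 0 ≤ N x)
    (hN1 : ∀ x, N x = 0 ↔ x = 0)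
    (hN2 : ∀ (a : ℝ) (x : ℝ × ℝ), N (a • x) = |a| * N x)
    (hN3 : ∀ x y, N (x + y) ≤ N x + N y)
    (Na : ℝ × ℝ → ℝ)
    (hNa : ∀ x, Na x = sSup ((fun y => ω x y) '' {y | N y = 1}))
    (hRadon : ∀ x y : ℝ × ℝ,
      (∀ s : ℝ, N x ≤ N (x + s • y)) → (∀ s : ℝ, N y ≤ N (y + s • x)))
    (L : ℝ) (hL : 0 < L)
    (ψ : ℝ → ℝ × ℝ) (hψ : ContDiff ℝ (⊤ : ℕ∞) ψ)
    (hper : Function.Periodic ψ L)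
    (hsym : ∀ t, ψ (t + L / 2) = -ψ t)
    (hinj : Set.InjOn ψ (Set.Ico 0 L))
    (hanticircle : ∀ t, Na (ψ t) = 1)
    (hunit : ∀ t, ω (ψ t) (deriv ψ t) = 1)
    (m : ℝ → ℝ) (hmrange : ∀ t, 0 < m t ∧ m t < L)
    (hm : ∀ t, ψ (t + m t) = (Na (deriv ψ t))⁻¹ • deriv ψ t) :
    ∀ t, m t + m (t + m t) = L / 2 := by
  -- curve differentiability
  have hψdiff : Differentiable ℝ ψ := hψ.differentiable (by simp)
  have hψd : ∀ u, HasDerivAt ψ (deriv ψ u) u := fun u => (hψdiff u).hasDerivAt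
  have hωd : ∀ (w : ℝ × ℝ) (u : ℝ),
      HasDerivAt (fun r => ω w (ψ r)) (ω w (deriv ψ u)) u := by
    intro w u
    have h1 : HasDerivAt (fun r => (ψ r).1) ((deriv ψ u).1) u := (hψd u).fst
    have h2 : HasDerivAt (fun r => (ψ r).2) ((deriv ψ u).2) u := (hψd u).snd
    have h3 : HasDerivAt
        (fun r => (ω (1,0) (0,1)) * (w.1 * (ψ r).2 - w.2 * (ψ r).1))
        ((ω (1,0) (0,1)) * (w.1 * (deriv ψ u).2 - w.2 * (deriv ψ u).1)) u :=
      ((h2.const_mul w.1).sub (h1.const_mul w.2)).const_mul _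
    have heq : (fun r => ω w (ψ r)) =
        (fun r => (ω (1,0) (0,1)) * (w.1 * (ψ r).2 - w.2 * (ψ r).1)) :=
      funext fun r => omega_form ω hskew w (ψ r)
    rw [heq, omega_form ω hskew w (deriv ψ u)]
    exact h3
  have hωcont : ∀ w : ℝ × ℝ, Continuous (fun r => ω w (ψ r)) :=
    fun w => continuous_iff_continuousAt.2 fun u => (hωd w u).continuousAt
  -- Na basics
  obtain ⟨K, hKpos, hKb⟩ := norm_bound N hN1 hN2 hN3
  have hsphne : ∃ y0 : ℝ × ℝ, N y0 = 1 := by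
    have hpos : 0 < N ((1:ℝ),(0:ℝ)) := by
      rcases lt_or_eq_of_le (hN0 ((1:ℝ),(0:ℝ))) with h | h
      · exact h
      · exfalso
        have := (hN1 ((1:ℝ),(0:ℝ))).1 h.symm
        have : (1:ℝ) = 0 := congrArg Prod.fst this
        norm_num at this
    refine ⟨(N ((1:ℝ),(0:ℝ)))⁻¹ • ((1:ℝ),(0:ℝ)), ?_⟩
    rw [hN2, abs_of_pos (inv_pos.2 hpos)]
    field_simp
  have hbdd : ∀ x, BddAbove ((fun y => ω x y) '' {y | N y = 1}) := by
    intro x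
    refine ⟨|ω (1,0) (0,1)| * ((|x.1| + |x.2|) * K), ?_⟩
    rintro v ⟨y, hy, rfl⟩
    have h1 : ‖y‖ ≤ K := hKb y (le_of_eq hy)
    have h2 : |y.1| ≤ K := le_trans (by simpa using norm_fst_le y) h1
    have h3 : |y.2| ≤ K := le_trans (by simpa using norm_snd_le y) h1
    show ω x y ≤ |ω (1,0) (0,1)| * ((|x.1| + |x.2|) * K)
    have h5 : |x.1 * y.2 - x.2 * y.1| ≤ |x.1| * |y.2| + |x.2| * |y.1| := by
      calc |x.1 * y.2 - x.2 * y.1| ≤ |x.1 * y.2| + |x.2 * y.1| := abs_sub _ _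
        _ = |x.1| * |y.2| + |x.2| * |y.1| := by rw [abs_mul, abs_mul]
    calc ω x y ≤ |ω x y| := le_abs_self _
      _ = |ω (1,0) (0,1)| * |x.1 * y.2 - x.2 * y.1| := by
          rw [omega_form ω hskew x y, abs_mul]
      _ ≤ |ω (1,0) (0,1)| * ((|x.1| + |x.2|) * K) := by
          apply mul_le_mul_of_nonneg_left _ (abs_nonneg _)
          refine h5.trans ?_
          nlinarith [abs_nonneg x.1, abs_nonneg x.2, abs_nonneg y.1, abs_nonneg y.2]
  have helem : ∀ x y, N y = 1 → ω x y ≤ Na x := by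
    intro x y hy
    rw [hNa]
    exact le_csSup (hbdd x) ⟨y, hy, rfl⟩
  have hNsymm : ∀ x, N (-x) = N x := by
    intro x
    have := hN2 (-1) x
    simpa using this
  have hNanneg : ∀ x, 0 ≤ Na x := by
    intro x
    obtain ⟨y0, hy0⟩ := hsphne
    have h1 := helem x y0 hy0
    have hy0' : N (-y0) = 1 := by rw [hNsymm, hy0]
    have h2 := helem x (-y0) hy0'
    have h3 : ω x (-y0) = - ω x y0 := by simp
    linarith
  have hpair : ∀ x y, ω x y ≤ Na x * N y := by
    intro x y
    rcases eq_or_ne y 0 with rfl | hy0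
    · simp [(hN1 (0 : ℝ × ℝ)).2 rfl]
    · have hNy : 0 < N y := by
        rcases lt_or_eq_of_le (hN0 y) with h | h
        · exact h
        · exact absurd ((hN1 y).1 h.symm) hy0
      have h1 : N ((N y)⁻¹ • y) = 1 := by
        rw [hN2, abs_of_pos (inv_pos.2 hNy)]
        field_simp
      have h2 := helem x _ h1
      have h3 : ω x ((N y)⁻¹ • y) = (N y)⁻¹ * ω x y := by
        rw [map_smul, smul_eq_mul]
      rw [h3] at h2
      calc ω x y = N y * ((N y)⁻¹ * ω x y) := by field_simp
        _ ≤ N y * Na x := mul_le_mul_of_nonneg_left h2 hNy.le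
        _ = Na x * N y := mul_comm _ _
  have hNahom : ∀ c : ℝ, 0 < c → ∀ x, Na (c • x) = c * Na x := by
    intro c hc x
    apply le_antisymm
    · rw [hNa (c • x)]
      apply Real.sSup_le
      · rintro v ⟨y, hy, rfl⟩
        show ω (c • x) y ≤ c * Na x
        have h1 : ω (c • x) y = c * ω x y := by
          rw [map_smul, LinearMap.smul_apply, smul_eq_mul]
        rw [h1]
        exact mul_le_mul_of_nonneg_left (helem x y hy) hc.le
      · exact mul_nonneg hc.le (hNanneg x)
    · have h4 : Na x ≤ c⁻¹ * Na (c • x) := by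
        rw [hNa x]
        apply Real.sSup_le
        · rintro v ⟨y, hy, rfl⟩
          show ω x y ≤ c⁻¹ * Na (c • x)
          have h1 : ω x y = c⁻¹ * ω (c • x) y := by
            rw [map_smul, LinearMap.smul_apply, smul_eq_mul]
            field_simp
          rw [h1]
          exact mul_le_mul_of_nonneg_left (helem (c • x) y hy) (inv_pos.2 hc).le
        · exact mul_nonneg (inv_pos.2 hc).le (hNanneg _)
      have h5 : c * Na x ≤ c * (c⁻¹ * Na (c • x)) := mul_le_mul_of_nonneg_left h4 hc.le
      rw [← mul_assoc, mul_inv_cancel₀ hc.ne', one_mul] at h5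
      exact h5
  have hNasub : ∀ x y, Na (x + y) ≤ Na x + Na y := by
    intro x y
    rw [hNa (x + y)]
    apply Real.sSup_le
    · rintro v ⟨z, hz, rfl⟩
      show ω (x + y) z ≤ Na x + Na y
      have h1 := helem x z hz
      have h2 := helem y z hz
      have h3 : ω (x + y) z = ω x z + ω y z := by rw [map_add, LinearMap.add_apply]
      rw [h3]
      linarith
    · linarith [hNanneg x, hNanneg y]
  have hNaminus : ∀ u, Na (-ψ u) = 1 := by
    intro u
    rw [← hsym u]
    exact hanticircle _
  -- curve nonvanishing
  have hψne : ∀ u, ψ u ≠ 0 := by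
    intro u h0
    have h1 := hanticircle u
    rw [h0] at h1
    have h2 : Na (0 : ℝ × ℝ) = 0 := by
      have := hNahom 2 (by norm_num) 0
      simp at this
      linarith
    rw [h2] at h1
    norm_num at h1
  have hψ'ne : ∀ u, deriv ψ u ≠ 0 := by
    intro u h0
    have := hunit u
    rw [h0, map_zero] at this
    norm_num at this
  have hcpos : ∀ u, 0 < Na (deriv ψ u) := by
    intro u
    rcases lt_or_eq_of_le (hNanneg (deriv ψ u)) with h | h
    · exact h
    · exfalso
      have h1 := hm u
      rw [← h, inv_zero, zero_smul] at h1
      exact hψne _ h1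
  have hderiv_eq : ∀ u, deriv ψ u = Na (deriv ψ u) • ψ (u + m u) := by
    intro u
    rw [hm u, smul_smul, mul_inv_cancel₀ (hcpos u).ne', one_smul]
  have hψ'ψ : ∀ u, ω (deriv ψ u) (ψ u) = -1 := by
    intro u
    rw [hskew, hunit u]
  -- F1 : the tangent functional
  have hF1 : ∀ u x, ω x (deriv ψ u) ≤ Na x := by
    intro u x
    obtain ⟨g, hg1, hg2⟩ := hb_ext Na hNahom hNasub hNanneg (ψ u) (hψne u)
    rw [hanticircle u] at hg1
    obtain ⟨w, hw⟩ := omega_rep ω hskew hnondeg g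
    have hmax : IsMaxOn (fun r => ω w (ψ r)) Set.univ u := by
      rw [isMaxOn_iff]
      intro r _
      calc ω w (ψ r) = g (ψ r) := (hw _).symm
        _ ≤ Na (ψ r) := hg2 _
        _ = 1 := hanticircle r
        _ = g (ψ u) := hg1.symm
        _ = ω w (ψ u) := hw _
    have hz := (hmax.isLocalMax Filter.univ_mem).hasDerivAt_eq_zero (hωd w u)
    have hwne : w ≠ 0 := by
      intro h0
      have h1 : g (ψ u) = 0 := by rw [hw, h0, map_zero, LinearMap.zero_apply]
      rw [hg1] at h1
      norm_num at h1
    obtain ⟨r, hr⟩ := omega_parallel ω hskew hnondeg w (deriv ψ u) hwne hz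
    have hgψ : ω w (ψ u) = 1 := by rw [← hw, hg1]
    have hr1 : r = -1 := by
      have h1 := hunit u
      rw [hr, map_smul, smul_eq_mul, hskew (ψ u) w, hgψ] at h1
      linarith
    calc ω x (deriv ψ u) = ω x (r • w) := by rw [hr]
      _ = r * ω x w := by rw [map_smul, smul_eq_mul]
      _ = - ω x w := by rw [hr1]; ring
      _ = ω w x := by rw [hskew x w]; ring
      _ = g x := (hw x).symm
      _ ≤ Na x := hg2 x
  -- N (deriv ψ u) = 1
  have hNhom : ∀ c : ℝ, 0 < c → ∀ x : ℝ × ℝ, N (c • x) = c * N x := by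
    intro c hc x
    rw [hN2, abs_of_pos hc]
  have hN'1 : ∀ u, N (deriv ψ u) = 1 := by
    intro u
    have hle : N (deriv ψ u) ≤ 1 := by
      obtain ⟨g, hg1, hg2⟩ := hb_ext N hNhom hN3 hN0 (deriv ψ u) (hψ'ne u)
      obtain ⟨w, hw⟩ := omega_rep ω hskew hnondeg g
      have hNaw : Na w ≤ 1 := by
        rw [hNa w]
        apply Real.sSup_le
        · rintro v ⟨y, hy, rfl⟩
          show ω w y ≤ 1
          calc ω w y = g y := (hw y).symm
            _ ≤ N y := hg2 y
            _ = 1 := hy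
        · norm_num
      calc N (deriv ψ u) = g (deriv ψ u) := hg1.symm
        _ = ω w (deriv ψ u) := hw _
        _ ≤ Na w := hF1 u w
        _ ≤ 1 := hNaw
    have hge : 1 ≤ N (deriv ψ u) := by
      have h1 := hpair (ψ u) (deriv ψ u)
      rw [hunit u, hanticircle u, one_mul] at h1
      exact h1
    linarith
  -- injectivity modulo L
  have hmod : ∀ A B, ψ A = ψ B → ∃ k : ℤ, A - B = k * L := by
    intro A B hAB
    have hA1 : 0 ≤ A - ⌊A / L⌋ * L := Int.sub_floor_div_mul_nonneg A hL
    have hA2 : A - ⌊A / L⌋ * L < L := Int.sub_floor_div_mul_lt A hL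
    have hB1 : 0 ≤ B - ⌊B / L⌋ * L := Int.sub_floor_div_mul_nonneg B hL
    have hB2 : B - ⌊B / L⌋ * L < L := Int.sub_floor_div_mul_lt B hL
    have hψA : ψ (A - ⌊A / L⌋ * L) = ψ A := hper.sub_int_mul_eq ⌊A / L⌋
    have hψB : ψ (B - ⌊B / L⌋ * L) = ψ B := hper.sub_int_mul_eq ⌊B / L⌋
    have heq : A - ⌊A / L⌋ * L = B - ⌊B / L⌋ * L := by
      apply hinj (Set.mem_Ico.2 ⟨hA1, hA2⟩) (Set.mem_Ico.2 ⟨hB1, hB2⟩)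
      rw [hψA, hψB, hAB]
    exact ⟨⌊A / L⌋ - ⌊B / L⌋, by push_cast; linarith⟩
  -- derivative symmetry
  have hdsym : ∀ u, deriv ψ (u + L / 2) = - deriv ψ u := by
    intro u
    have h2 : HasDerivAt (fun x => -ψ x) (-deriv ψ u) u := (hψd u).neg
    have heq : (fun x : ℝ => ψ (x + L / 2)) = fun x => -ψ x := funext hsym
    have h1 : HasDerivAt (fun x : ℝ => ψ (x + L / 2)) (deriv ψ (u + L / 2)) u := by
      have hg : HasDerivAt (fun x : ℝ => x + L / 2) 1 u := by
        simpa using (hasDerivAt_id u).add_const (L / 2)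
      have h3 := HasDerivAt.scomp (𝕜 := ℝ) u (hψd (u + L / 2)) hg
      rw [one_smul] at h3
      exact h3
    rw [heq] at h1
    exact h1.unique h2
  -- zeros of r ↦ ω (ψ u) (ψ r)
  have hzero : ∀ u r, ω (ψ u) (ψ r) = 0 →
      (∃ k : ℤ, r - u = k * L) ∨ (∃ k : ℤ, r - u = L / 2 + k * L) := by
    intro u r h0
    obtain ⟨α, hα⟩ := omega_parallel ω hskew hnondeg (ψ u) (ψ r) (hψne u) h0
    rcases lt_trichotomy α 0 with hneg | h00 | hposα
    · right
      have h1 : ψ r = (-α) • (-ψ u) := by rw [hα]; simp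
      have h2 : Na (ψ r) = (-α) * Na (-ψ u) := by rw [h1, hNahom (-α) (by linarith)]
      rw [hanticircle, hNaminus] at h2
      have hα1 : α = -1 := by linarith
      have h3 : ψ r = ψ (u + L / 2) := by
        rw [hα, hα1, hsym u]
        simp
      obtain ⟨k, hk⟩ := hmod r (u + L / 2) h3
      exact ⟨k, by linarith⟩
    · exfalso
      rw [h00, zero_smul] at hα
      exact hψne r hα
    · left
      have h2 : Na (ψ r) = α * Na (ψ u) := by rw [hα, hNahom α hposα]
      rw [hanticircle, hanticircle] at h2
      have hα1 : α = 1 := by linarith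
      have h3 : ψ r = ψ u := by rw [hα, hα1, one_smul]
      obtain ⟨k, hk⟩ := hmod r u h3
      exact ⟨k, hk⟩
  -- m u < L / 2
  have hmlt : ∀ u, m u < L / 2 := by
    intro u
    obtain ⟨hm0, hmL⟩ := hmrange u
    have hval : ω (ψ u) (ψ (u + m u)) = (Na (deriv ψ u))⁻¹ := by
      rw [hm u, map_smul, smul_eq_mul, hunit u, mul_one]
    have hvalpos : 0 < (Na (deriv ψ u))⁻¹ := inv_pos.2 (hcpos u)
    by_contra hcon
    push_neg at hcon
    have hne2 : m u ≠ L / 2 := by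
      intro he
      rw [he, hsym u, map_neg, omega_self ω hskew, neg_zero] at hval
      exact absurd hval.symm (ne_of_gt hvalpos)
    have hgt : L / 2 < m u := lt_of_le_of_ne hcon (Ne.symm hne2)
    have hat : ω (ψ u) (ψ (u + L / 2)) = 0 := by
      rw [hsym u, map_neg, omega_self ω hskew]
      simp
    have hd2 : HasDerivAt (fun r => ω (ψ u) (ψ r)) (-1) (u + L / 2) := by
      have h1 := hωd (ψ u) (u + L / 2)
      rw [hdsym u] at h1
      have h2 : ω (ψ u) (-(deriv ψ u)) = -1 := by rw [map_neg, hunit u]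
      rw [h2] at h1
      exact h1
    have hslope := hasDerivAt_iff_tendsto_slope.1 hd2
    have hsub : Set.Ioi (u + L / 2) ⊆ {u + L / 2}ᶜ := fun x hx => ne_of_gt hx
    have hslope' : Filter.Tendsto (slope (fun r => ω (ψ u) (ψ r)) (u + L / 2))
        (nhdsWithin (u + L / 2) (Set.Ioi (u + L / 2))) (nhds (-1)) :=
      hslope.mono_left (nhdsWithin_mono _ hsub)
    have hev1 : ∀ᶠ r in nhdsWithin (u + L / 2) (Set.Ioi (u + L / 2)),
        slope (fun r => ω (ψ u) (ψ r)) (u + L / 2) r < 0 :=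
      hslope'.eventually_lt_const (by norm_num)
    have hev2 : Set.Ioo (u + L / 2) (u + m u) ∈
        nhdsWithin (u + L / 2) (Set.Ioi (u + L / 2)) :=
      Ioo_mem_nhdsGT_of_mem ⟨le_refl _, by linarith⟩
    obtain ⟨r₁, hr₁s, hr₁m⟩ := (hev1.and (Filter.eventually_of_mem hev2 fun x hx => hx)).exists
    have hr1neg : ω (ψ u) (ψ r₁) < 0 := by
      have hsl : slope (fun r => ω (ψ u) (ψ r)) (u + L / 2) r₁ =
          (ω (ψ u) (ψ r₁)) / (r₁ - (u + L / 2)) := by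
        rw [slope_def_field]
        rw [hat]
        ring_nf
      rw [hsl] at hr₁s
      have hd : 0 < r₁ - (u + L / 2) := by linarith [hr₁m.1]
      by_contra hge
      push_neg at hge
      have : 0 ≤ ω (ψ u) (ψ r₁) / (r₁ - (u + L / 2)) := div_nonneg hge hd.le
      linarith
    have hcont2 : ContinuousOn (fun r => ω (ψ u) (ψ r)) (Set.Icc r₁ (u + m u)) :=
      (hωcont (ψ u)).continuousOn
    have hr1le : r₁ ≤ u + m u := le_of_lt hr₁m.2
    have h0mem : (0:ℝ) ∈ Set.Ioo (ω (ψ u) (ψ r₁)) (ω (ψ u) (ψ (u + m u))) := by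
      constructor
      · exact hr1neg
      · rw [hval]; exact hvalpos
    obtain ⟨z, hzmem, hz0⟩ := intermediate_value_Ioo hr1le hcont2 h0mem
    have hz1 : L / 2 < z - u := by
      have := hr₁m.1
      have := hzmem.1
      linarith
    have hz2 : z - u < L := by
      have := hzmem.2
      linarith
    rcases hzero u z hz0 with ⟨k, hk⟩ | ⟨k, hk⟩
    · have hk1 : (0:ℝ) < (k:ℝ) * L := by rw [← hk]; linarith
      have hk2 : (0:ℤ) < k := by
        by_contra hkn
        push_neg at hkn
        have : (k:ℝ) ≤ 0 := by exact_mod_cast hkn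
        nlinarith
      have hk3 : (1:ℝ) ≤ (k:ℝ) := by exact_mod_cast hk2
      nlinarith
    · have hk1 : (0:ℝ) < (k:ℝ) * L := by linarith
      have hk2 : (k:ℝ) * L < L / 2 := by linarith
      have hkpos : (0:ℤ) < k := by
        by_contra hkn
        push_neg at hkn
        have : (k:ℝ) ≤ 0 := by exact_mod_cast hkn
        nlinarith
      have hk3 : (1:ℝ) ≤ (k:ℝ) := by exact_mod_cast hkpos
      nlinarith
  -- main argument
  intro t
  set s := t + m t with hs
  set c := Na (deriv ψ t) with hcdef
  have hc : 0 < c := hcpos t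
  have hψs : ψ s = c⁻¹ • deriv ψ t := hm t
  have hψ't : deriv ψ t = c • ψ s := hderiv_eq t
  -- Birkhoff premise : deriv ψ t ⊣ ψ t
  have hprem : ∀ ρ : ℝ, N (deriv ψ t) ≤ N (deriv ψ t + ρ • ψ t) := by
    intro ρ
    have h1 : ω (ψ t) (deriv ψ t + ρ • ψ t) = 1 := by
      rw [map_add, map_smul, smul_eq_mul, hunit t, omega_self ω hskew]
      ring
    have h2 := hpair (ψ t) (deriv ψ t + ρ • ψ t)
    rw [hanticircle t, one_mul, h1] at h2
    calc N (deriv ψ t) ≤ 1 := le_of_eq (hN'1 t)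
      _ ≤ N (deriv ψ t + ρ • ψ t) := h2
  have hconc := hRadon (deriv ψ t) (ψ t) hprem
  -- ω (deriv ψ t) (deriv ψ s) = c
  have hos : ω (deriv ψ t) (deriv ψ s) = c := by
    rw [hψ't, map_smul, LinearMap.smul_apply, smul_eq_mul, hunit s, mul_one]
  -- N (ψ t) = c⁻¹
  have hineq1 : N (ψ t) ≤ c⁻¹ := by
    have hpar0 : ω (deriv ψ t) ((-(c⁻¹)) • deriv ψ s - ψ t) = 0 := by
      rw [map_sub, map_smul, smul_eq_mul, hos, hψ'ψ t]
      field_simp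
      ring
    obtain ⟨ρ, hρ⟩ := omega_parallel ω hskew hnondeg (deriv ψ t) _ (hψ'ne t) hpar0
    have heqq : (-(c⁻¹)) • deriv ψ s = ψ t + ρ • deriv ψ t := by
      have h9 := sub_eq_iff_eq_add.1 hρ
      rw [h9, add_comm]
    calc N (ψ t) ≤ N (ψ t + ρ • deriv ψ t) := hconc ρ
      _ = N ((-(c⁻¹)) • deriv ψ s) := by rw [heqq]
      _ = |(-(c⁻¹))| * N (deriv ψ s) := hN2 _ _
      _ = c⁻¹ := by
          rw [hN'1 s, abs_neg, abs_of_pos (inv_pos.2 hc)]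
          ring
  have hineq2 : c⁻¹ ≤ N (ψ t) := by
    have h1 : ω (deriv ψ t) (-ψ t) = 1 := by
      rw [map_neg, hψ'ψ t]
      ring
    have h2 := hpair (deriv ψ t) (-ψ t)
    rw [h1, hNsymm, ← hcdef] at h2
    calc c⁻¹ = c⁻¹ * 1 := (mul_one _).symm
      _ ≤ c⁻¹ * (c * N (ψ t)) := mul_le_mul_of_nonneg_left h2 (inv_pos.2 hc).le
      _ = N (ψ t) := by field_simp
  have hNψt : N (ψ t) = c⁻¹ := le_antisymm hineq1 hineq2
  -- the line through ψ s in direction ψ t stays outside the anti-disc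
  have hstep7 : ∀ r : ℝ, 1 ≤ Na (ψ s + r • ψ t) := by
    intro r
    have hv : N ((-c) • ψ t) = 1 := by
      rw [hN2, hNψt, abs_neg, abs_of_pos hc]
      field_simp
    have hsψt : ω (ψ s) (ψ t) = -c⁻¹ := by
      rw [hψs, map_smul, LinearMap.smul_apply, smul_eq_mul, hψ'ψ t]
      ring
    have hval : ω (ψ s + r • ψ t) ((-c) • ψ t) = 1 := by
      simp only [map_add, map_smul, map_neg, LinearMap.add_apply, LinearMap.smul_apply,
        LinearMap.neg_apply, smul_eq_mul, omega_self ω hskew, hsψt]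
      field_simp
      ring
    calc (1:ℝ) = ω (ψ s + r • ψ t) ((-c) • ψ t) := hval.symm
      _ ≤ Na (ψ s + r • ψ t) := helem _ _ hv
  -- the function r ↦ ω (ψ t) (ψ r) is maximal at s
  have hb8 : ω (ψ t) (ψ s) = c⁻¹ := by
    rw [hψs, map_smul, smul_eq_mul, hunit t, mul_one]
  have hmax8 : ∀ r, ω (ψ t) (ψ r) ≤ ω (ψ t) (ψ s) := by
    intro r
    by_contra hcon
    push_neg at hcon
    have hbpos : 0 < ω (ψ t) (ψ r) := by
      have : (0:ℝ) < c⁻¹ := inv_pos.2 hc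
      rw [hb8] at hcon
      linarith
    set β := (ω (ψ t) (ψ s)) / (ω (ψ t) (ψ r)) with hβ
    have hβ1 : 0 < β := by
      apply div_pos _ hbpos
      rw [hb8]
      exact inv_pos.2 hc
    have hβ2 : β < 1 := (div_lt_one hbpos).2 hcon
    have hone : ω (ψ t) (β • ψ r) = ω (ψ t) (ψ s) := by
      rw [map_smul, smul_eq_mul, hβ]
      field_simp
    have hNap : Na (β • ψ r) = β := by
      rw [hNahom β hβ1, hanticircle, mul_one]
    have hpp : ω (ψ t) ((β • ψ r) - ψ s) = 0 := by
      rw [map_sub, hone]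
      ring
    obtain ⟨r', hr'⟩ := omega_parallel ω hskew hnondeg (ψ t) _ (hψne t) hpp
    have heqq : β • ψ r = ψ s + r' • ψ t := by
      have := sub_eq_iff_eq_add.1 hr'
      rw [this, add_comm]
    have h7 := hstep7 r'
    rw [← heqq, hNap] at h7
    linarith
  have hmax8' : IsMaxOn (fun r => ω (ψ t) (ψ r)) Set.univ s := by
    rw [isMaxOn_iff]
    intro r _
    exact hmax8 r
  have hderiv0 : ω (ψ t) (deriv ψ s) = 0 :=
    (hmax8'.isLocalMax Filter.univ_mem).hasDerivAt_eq_zero (hωd (ψ t) s)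
  -- deriv ψ s = -c • ψ t
  obtain ⟨lam, hlam⟩ := omega_parallel ω hskew hnondeg (ψ t) (deriv ψ s) (hψne t) hderiv0
  have hlamval : lam = -c := by
    have h1 := hos
    rw [hlam, map_smul, smul_eq_mul, hψ'ψ t] at h1
    linarith
  have hcs : Na (deriv ψ s) = c := by
    have h1 : deriv ψ s = c • (-ψ t) := by
      rw [hlam, hlamval]
      ext <;> simp
    rw [h1, hNahom c hc, hNaminus, mul_one]
  have hfinal : ψ (s + m s) = ψ (t + L / 2) := by
    rw [hm s, hcs, hlam, hlamval, hsym t, smul_smul]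
    have h1 : c⁻¹ * (-c) = -1 := by field_simp
    rw [h1, neg_one_smul]
  obtain ⟨k, hk⟩ := hmod (s + m s) (t + L / 2) hfinal
  have h1 := hmlt t
  have h2 := hmlt s
  have hm0t := (hmrange t).1
  have hm0s := (hmrange s).1
  have hk0 : k = 0 := by
    by_contra hkne
    have habs : (1:ℝ) ≤ |(k:ℝ)| := by
      have := Int.one_le_abs (by exact_mod_cast hkne : k ≠ 0)
      exact_mod_cast this
    have hval : (k:ℝ) * L = m t + m s - L / 2 := by
      rw [← hk, hs]
      ring
    have hb1 : -(L/2) < (k:ℝ) * L := by rw [hval]; linarith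
    have hb2 : (k:ℝ) * L < L / 2 := by rw [hval]; linarith
    have : |(k:ℝ) * L| < L / 2 := abs_lt.2 ⟨hb1, hb2⟩
    rw [abs_mul, abs_of_pos hL] at this
    nlinarith
  rw [hk0] at hk
  push_cast at hk
  have : s + m s - (t + L / 2) = 0 := by linarith
  rw [hs] at this ⊢
  linarith
end
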